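/- arXiv:1709.03737 — 8 statements merged into one kernel-verified Lean document; each statement's English description precedes it below -/
import Mathlib

section
/- Let V : ℝ^N → ℝ be continuous with inf V > 0 and fix ε > 0, and set ‖u‖_ε^p = [u]_{s,p}^p + ∫_{ℝ^N} V(εx)|u(x)|^p dx. Suppose {u_n} satisfies sup_n ‖u_n‖_ε < ∞, u_n → u almost everywhere in ℝ^N, and ‖u‖_ε < ∞. Then ‖u_n − u‖_ε^p − ‖u_n‖_ε^p + ‖u‖_ε^p → 0 as n → ∞. -/
open MeasureTheory Filter Topology Metric Set
open scoped NNReal ENNReal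

noncomputable section

/-- The `p`-th power of the Gagliardo seminorm `[u]_{s,p}^p`. -/
noncomputable def gagliardoP (N : ℕ) (s p : ℝ) (u : EuclideanSpace ℝ (Fin N) → ℝ) : ℝ :=
  ∫ z : EuclideanSpace ℝ (Fin N) × EuclideanSpace ℝ (Fin N),
    |u z.1 - u z.2| ^ p / dist z.1 z.2 ^ ((N : ℝ) + s * p)

/-- Finiteness of the Gagliardo seminorm, expressed as integrability of the
Gagliardo integrand. -/
def GagliardoFinite (N : ℕ) (s p : ℝ) (u : EuclideanSpace ℝ (Fin N) → ℝ) : Prop :=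
  Integrable
    (fun z : EuclideanSpace ℝ (Fin N) × EuclideanSpace ℝ (Fin N) =>
      |u z.1 - u z.2| ^ p / dist z.1 z.2 ^ ((N : ℝ) + s * p)) volume

/-- Membership in the fractional Sobolev space `W^{s,p}(ℝ^N)`. -/
def MemWsp (N : ℕ) (s p : ℝ) (u : EuclideanSpace ℝ (Fin N) → ℝ) : Prop :=
  MemLp u (ENNReal.ofReal p) volume ∧ GagliardoFinite N s p u

section AuxBL

lemma rpow_mvt {p M x y : ℝ} (hp : 1 ≤ p) (hx : x ∈ Icc 0 M) (hy : y ∈ Icc 0 M) :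
    |x ^ p - y ^ p| ≤ p * M ^ (p - 1) * |x - y| := by
  have hM : 0 ≤ M := hx.1.trans hx.2
  have key := Convex.norm_image_sub_le_of_norm_hasDerivWithin_le
    (f := fun t : ℝ => t ^ p) (f' := fun t : ℝ => p * t ^ (p - 1))
    (C := p * M ^ (p - 1)) (s := Icc (0:ℝ) M)
    (fun t _ => (Real.hasDerivAt_rpow_const (Or.inr hp)).hasDerivWithinAt)
    (fun t ht => by
      rw [Real.norm_eq_abs, abs_of_nonneg (mul_nonneg (by linarith) (Real.rpow_nonneg ht.1 _))]
      exact mul_le_mul_of_nonneg_left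
        (Real.rpow_le_rpow ht.1 ht.2 (by linarith)) (by linarith))
    (convex_Icc 0 M) hy hx
  simpa [Real.norm_eq_abs] using key

lemma two_rpow_bound {x y r : ℝ} (hx : 0 ≤ x) (hy : 0 ≤ y) (hr : 0 ≤ r) :
    (x + y) ^ r ≤ 2 ^ r * (x ^ r + y ^ r) := by
  have h1 : x + y ≤ 2 * max x y := by
    rcases le_total x y with h | h
    · simp [max_eq_right h]; linarith
    · simp [max_eq_left h]; linarith
  calc (x + y) ^ r ≤ (2 * max x y) ^ r :=
        Real.rpow_le_rpow (by positivity) h1 hr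
    _ = 2 ^ r * (max x y) ^ r := Real.mul_rpow (by norm_num) (le_max_of_le_left hx)
    _ ≤ 2 ^ r * (x ^ r + y ^ r) := by
        apply mul_le_mul_of_nonneg_left _ (by positivity)
        rcases le_total x y with h | h
        · rw [max_eq_right h]; nlinarith [Real.rpow_nonneg hx r]
        · rw [max_eq_left h]; nlinarith [Real.rpow_nonneg hy r]

lemma young_aux {p : ℝ} (hp : 1 < p) {η : ℝ} (hη : 0 < η) :
    ∃ C : ℝ, 0 ≤ C ∧ ∀ A B : ℝ, 0 ≤ A → 0 ≤ B →
      A ^ (p - 1) * B ≤ η * A ^ p + C * B ^ p := by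
  have hpq : p.HolderConjugate (p / (p - 1)) := Real.HolderConjugate.conjExponent hp
  set q := p / (p - 1) with hqdef
  have hq : q.HolderConjugate p := hpq.symm
  have hq0 : 0 < q := hq.pos
  have hp0 : 0 < p := hpq.pos
  set lam := (η * q) ^ (1 / q) with hlam
  have hlam0 : 0 < lam := Real.rpow_pos_of_pos (by positivity) _
  have hlamq : lam ^ q = η * q := by
    rw [hlam, ← Real.rpow_mul (by positivity), one_div, inv_mul_cancel₀ hq0.ne',
      Real.rpow_one]
  refine ⟨1 / (lam ^ p * p), by positivity, fun A B hA hB => ?_⟩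
  have young := Real.young_inequality_of_nonneg
    (a := lam * A ^ (p - 1)) (b := B / lam)
    (by positivity) (by positivity) hq
  have h1 : (lam * A ^ (p - 1)) * (B / lam) = A ^ (p - 1) * B := by
    field_simp
  have h2 : (lam * A ^ (p - 1)) ^ q = lam ^ q * A ^ p := by
    rw [Real.mul_rpow hlam0.le (Real.rpow_nonneg hA _), ← Real.rpow_mul hA,
      hpq.sub_one_mul_conj]
  have h3 : (B / lam) ^ p = B ^ p / lam ^ p :=
    Real.div_rpow hB hlam0.le p
  rw [h1, h2, h3, hlamq] at young
  calc A ^ (p - 1) * B ≤ η * q * A ^ p / q + B ^ p / lam ^ p / p := young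
    _ = η * A ^ p + 1 / (lam ^ p * p) * B ^ p := by field_simp

lemma key_ineq {p : ℝ} (hp : 1 < p) {η : ℝ} (hη : 0 < η) :
    ∃ C : ℝ, 0 ≤ C ∧ ∀ a b : ℝ,
      abs (|a + b| ^ p - |a| ^ p) ≤ η * |a| ^ p + C * |b| ^ p := by
  set K := p * 2 ^ (p - 1) with hK
  have hK0 : 0 < K := by positivity
  obtain ⟨C₁, hC₁0, hC₁⟩ := young_aux hp (show 0 < η / K by positivity)
  refine ⟨K * C₁ + K, by positivity, fun a b => ?_⟩
  have hab : |a + b| ∈ Icc 0 (|a| + |b|) := ⟨abs_nonneg _, abs_add_le a b⟩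
  have ha : |a| ∈ Icc 0 (|a| + |b|) := ⟨abs_nonneg _, by simp [abs_nonneg b]⟩
  have step1 : abs (|a + b| ^ p - |a| ^ p) ≤ p * (|a| + |b|) ^ (p - 1) * |b| := by
    calc abs (|a + b| ^ p - |a| ^ p)
        ≤ p * (|a| + |b|) ^ (p - 1) * abs (|a + b| - |a|) := rpow_mvt hp.le hab ha
      _ ≤ p * (|a| + |b|) ^ (p - 1) * |b| := by
          apply mul_le_mul_of_nonneg_left _ (by positivity)
          simpa using abs_abs_sub_abs_le_abs_sub (a + b) a
  have step2 : (|a| + |b|) ^ (p - 1) ≤ 2 ^ (p - 1) * (|a| ^ (p - 1) + |b| ^ (p - 1)) :=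
    two_rpow_bound (abs_nonneg a) (abs_nonneg b) (by linarith)
  have hbp : |b| ^ (p - 1) * |b| = |b| ^ p := by
    rcases eq_or_ne b 0 with rfl | hb
    · simp [Real.zero_rpow (by linarith : p - 1 ≠ 0), Real.zero_rpow (by positivity : p ≠ 0)]
    · rw [← Real.rpow_add_one (abs_ne_zero.2 hb), sub_add_cancel]
  have step3 : p * (|a| + |b|) ^ (p - 1) * |b| ≤ K * (|a| ^ (p - 1) * |b|) + K * |b| ^ p := by
    have := mul_le_mul_of_nonneg_left step2 (le_of_lt (by positivity : (0:ℝ) < p))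
    calc p * (|a| + |b|) ^ (p - 1) * |b|
        ≤ p * (2 ^ (p - 1) * (|a| ^ (p - 1) + |b| ^ (p - 1))) * |b| :=
          mul_le_mul_of_nonneg_right this (abs_nonneg b)
      _ = K * (|a| ^ (p - 1) * |b|) + K * (|b| ^ (p - 1) * |b|) := by rw [hK]; ring
      _ = K * (|a| ^ (p - 1) * |b|) + K * |b| ^ p := by rw [hbp]
  have step4 : K * (|a| ^ (p - 1) * |b|) ≤ η * |a| ^ p + K * C₁ * |b| ^ p := by
    have := hC₁ |a| |b| (abs_nonneg a) (abs_nonneg b)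
    calc K * (|a| ^ (p - 1) * |b|) ≤ K * (η / K * |a| ^ p + C₁ * |b| ^ p) :=
          mul_le_mul_of_nonneg_left this hK0.le
      _ = η * |a| ^ p + K * C₁ * |b| ^ p := by field_simp
  calc abs (|a + b| ^ p - |a| ^ p) ≤ p * (|a| + |b|) ^ (p - 1) * |b| := step1
    _ ≤ K * (|a| ^ (p - 1) * |b|) + K * |b| ^ p := step3
    _ ≤ η * |a| ^ p + K * C₁ * |b| ^ p + K * |b| ^ p := by linarith
    _ = η * |a| ^ p + (K * C₁ + K) * |b| ^ p := by ring

lemma brezisLieb {α : Type*} [MeasurableSpace α] (μ : Measure α) {p : ℝ} (hp : 1 < p)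
    (f : ℕ → α → ℝ) (g : α → ℝ)
    (hfm : ∀ n, AEStronglyMeasurable (f n) μ)
    (hgm : AEStronglyMeasurable g μ)
    (hfi : ∀ n, Integrable (fun x => |f n x| ^ p) μ)
    (hgi : Integrable (fun x => |g x| ^ p) μ)
    {C : ℝ} (hC : ∀ n, ∫ x, |f n x| ^ p ∂μ ≤ C)
    (hae : ∀ᵐ x ∂μ, Tendsto (fun n => f n x) atTop (𝓝 (g x))) :
    Tendsto (fun n => (∫ x, |f n x - g x| ^ p ∂μ) - (∫ x, |f n x| ^ p ∂μ)
      + ∫ x, |g x| ^ p ∂μ) atTop (𝓝 0) := by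
  have hp0 : (0:ℝ) < p := lt_trans one_pos hp
  have hcont : Continuous (fun t : ℝ => |t| ^ p) :=
    continuous_abs.rpow_const (fun x => Or.inr hp0.le)
  have hdm : ∀ n, AEStronglyMeasurable (fun x => |f n x - g x| ^ p) μ :=
    fun n => hcont.comp_aestronglyMeasurable ((hfm n).sub hgm)
  -- pointwise bound |f n x - g x|^p ≤ 2^p * (|f n x|^p + |g x|^p)
  have hptw : ∀ n x, |f n x - g x| ^ p ≤ 2 ^ p * (|f n x| ^ p + |g x| ^ p) := by
    intro n x
    calc |f n x - g x| ^ p ≤ (|f n x| + |g x|) ^ p :=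
          Real.rpow_le_rpow (abs_nonneg _) (abs_sub _ _) hp0.le
      _ ≤ 2 ^ p * (|f n x| ^ p + |g x| ^ p) :=
          two_rpow_bound (abs_nonneg _) (abs_nonneg _) hp0.le
  have hdi : ∀ n, Integrable (fun x => |f n x - g x| ^ p) μ := by
    intro n
    refine Integrable.mono' (((hfi n).add hgi).const_mul (2 ^ p)) (hdm n) ?_
    filter_upwards with x
    rw [Real.norm_eq_abs, abs_of_nonneg (Real.rpow_nonneg (abs_nonneg _) _)]
    exact hptw n x
  set M : ℝ := 2 ^ p * (C + ∫ x, |g x| ^ p ∂μ) with hMdef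
  have hM : ∀ n, ∫ x, |f n x - g x| ^ p ∂μ ≤ M := by
    intro n
    calc ∫ x, |f n x - g x| ^ p ∂μ
        ≤ ∫ x, 2 ^ p * (|f n x| ^ p + |g x| ^ p) ∂μ :=
          integral_mono (hdi n) (((hfi n).add hgi).const_mul (2 ^ p)) (hptw n)
      _ = 2 ^ p * ((∫ x, |f n x| ^ p ∂μ) + ∫ x, |g x| ^ p ∂μ) := by
          rw [integral_const_mul, integral_add (hfi n) hgi]
      _ ≤ M := by
          rw [hMdef]
          apply mul_le_mul_of_nonneg_left _ (by positivity)
          have := hC n; linarith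
  have hM0 : 0 ≤ M :=
    le_trans (integral_nonneg (fun x => Real.rpow_nonneg (abs_nonneg _) _)) (hM 0)
  -- integrability of the difference
  have hdn : ∀ n, Integrable
      (fun x => |f n x - g x| ^ p - |f n x| ^ p + |g x| ^ p) μ :=
    fun n => ((hdi n).sub (hfi n)).add hgi
  have hS : ∀ n, (∫ x, |f n x - g x| ^ p ∂μ) - (∫ x, |f n x| ^ p ∂μ)
      + ∫ x, |g x| ^ p ∂μ
      = ∫ x, (|f n x - g x| ^ p - |f n x| ^ p + |g x| ^ p) ∂μ := by
    intro n
    have hsub : Integrable (fun x => |f n x - g x| ^ p - |f n x| ^ p) μ :=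
      (hdi n).sub (hfi n)
    rw [← integral_sub (hdi n) (hfi n), ← integral_add hsub hgi]
  rw [NormedAddCommGroup.tendsto_nhds_zero]
  intro δ hδ
  set η : ℝ := δ / (2 * (M + 1)) with hηdef
  have hη : 0 < η := by positivity
  obtain ⟨C₂, hC₂0, hC₂⟩ := key_ineq hp hη
  set W : ℕ → α → ℝ := fun n x =>
    max (|(|f n x - g x| ^ p - |f n x| ^ p + |g x| ^ p)| - η * |f n x - g x| ^ p) 0
    with hWdef
  have hWle : ∀ n x, W n x ≤ (C₂ + 1) * |g x| ^ p := by
    intro n x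
    apply max_le _ (by positivity)
    have key := hC₂ (f n x - g x) (g x)
    rw [sub_add_cancel] at key
    have hCg : 0 ≤ |g x| ^ p := Real.rpow_nonneg (abs_nonneg _) _
    have t1 : |(|f n x - g x| ^ p - |f n x| ^ p + |g x| ^ p)|
        ≤ |(|f n x - g x| ^ p - |f n x| ^ p)| + |g x| ^ p := by
      calc |(|f n x - g x| ^ p - |f n x| ^ p + |g x| ^ p)|
          ≤ |(|f n x - g x| ^ p - |f n x| ^ p)| + |(|g x| ^ p)| := abs_add_le _ _
        _ = |(|f n x - g x| ^ p - |f n x| ^ p)| + |g x| ^ p := by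
            rw [abs_of_nonneg hCg]
    have t2 : |(|f n x - g x| ^ p - |f n x| ^ p)|
        = |(|f n x| ^ p - |f n x - g x| ^ p)| := abs_sub_comm _ _
    rw [t2] at t1
    linarith
  have hWnonneg : ∀ n x, 0 ≤ W n x := fun n x => le_max_right _ _
  have hWint : ∀ n, Integrable (W n) μ := by
    intro n
    have h1 : Integrable (fun x =>
        |(|f n x - g x| ^ p - |f n x| ^ p + |g x| ^ p)|) μ := (hdn n).abs
    have h2 : Integrable (fun x => η * |f n x - g x| ^ p) μ := (hdi n).const_mul η
    exact (h1.sub h2).pos_part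
  have hWm : ∀ n, AEStronglyMeasurable (W n) μ :=
    fun n => (hWint n).aestronglyMeasurable
  have hWtendsto : Tendsto (fun n => ∫ x, W n x ∂μ) atTop (𝓝 0) := by
    have h0 : (0:ℝ) = ∫ _ : α, (0:ℝ) ∂μ := by simp
    rw [h0]
    apply tendsto_integral_of_dominated_convergence
      (fun x => (C₂ + 1) * |g x| ^ p) hWm (hgi.const_mul _)
    · intro n
      filter_upwards with x
      rw [Real.norm_eq_abs, abs_of_nonneg (hWnonneg n x)]
      exact hWle n x
    · filter_upwards [hae] with x hx
      have hx0 : Tendsto (fun n => f n x - g x) atTop (𝓝 0) := by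
        simpa using hx.sub (tendsto_const_nhds (x := g x))
      have h1 : Tendsto (fun n => |f n x - g x| ^ p) atTop (𝓝 0) := by
        have := (hcont.tendsto 0).comp hx0
        simpa [Real.zero_rpow hp0.ne', Function.comp_def] using this
      have h2 : Tendsto (fun n => |f n x| ^ p) atTop (𝓝 (|g x| ^ p)) :=
        (hcont.tendsto (g x)).comp hx
      have h1' : Tendsto (fun n => η * |f n x - g x| ^ p) atTop (𝓝 0) := by
        simpa using h1.const_mul η
      have h2' : Tendsto (fun n => |f n x - g x| ^ p - |f n x| ^ p + |g x| ^ p)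
          atTop (𝓝 0) := by
        simpa using (h1.sub h2).add (tendsto_const_nhds (x := |g x| ^ p))
      have h3 : Tendsto (fun n =>
          |(|f n x - g x| ^ p - |f n x| ^ p + |g x| ^ p)| - η * |f n x - g x| ^ p)
          atTop (𝓝 0) := by
        simpa using h2'.abs.sub h1'
      simpa using h3.max (tendsto_const_nhds (x := (0:ℝ)))
  have hWev : ∀ᶠ n in atTop, ∫ x, W n x ∂μ < δ / 2 := by
    have := hWtendsto.eventually (eventually_lt_nhds (show (0:ℝ) < δ / 2 by positivity))
    exact this
  filter_upwards [hWev] with n hWn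
  rw [hS n, Real.norm_eq_abs]
  have habs_le : ∀ x, |(|f n x - g x| ^ p - |f n x| ^ p + |g x| ^ p)|
      ≤ W n x + η * |f n x - g x| ^ p := by
    intro x
    have := le_max_left (|(|f n x - g x| ^ p - |f n x| ^ p + |g x| ^ p)|
      - η * |f n x - g x| ^ p) (0:ℝ)
    rw [hWdef]; dsimp only; linarith
  calc |∫ x, (|f n x - g x| ^ p - |f n x| ^ p + |g x| ^ p) ∂μ|
      ≤ ∫ x, |(|f n x - g x| ^ p - |f n x| ^ p + |g x| ^ p)| ∂μ := by
        simpa [Real.norm_eq_abs] using norm_integral_le_integral_norm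
          (fun x => |f n x - g x| ^ p - |f n x| ^ p + |g x| ^ p) (μ := μ)
    _ ≤ ∫ x, (W n x + η * |f n x - g x| ^ p) ∂μ :=
        integral_mono (hdn n).abs ((hWint n).add ((hdi n).const_mul η)) habs_le
    _ = (∫ x, W n x ∂μ) + η * ∫ x, |f n x - g x| ^ p ∂μ := by
        rw [integral_add (hWint n) ((hdi n).const_mul η), integral_const_mul]
    _ < δ / 2 + η * M := by
        have h4 : η * ∫ x, |f n x - g x| ^ p ∂μ ≤ η * M :=
          mul_le_mul_of_nonneg_left (hM n) hη.le
        linarith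
    _ ≤ δ / 2 + δ / 2 := by
        have : η * M ≤ δ / 2 := by
          rw [hηdef]
          rw [div_mul_eq_mul_div, div_le_div_iff₀ (by positivity) (by norm_num)]
          nlinarith
        linarith
    _ = δ := by ring

end AuxBL

/-- Brezis–Lieb for the `ε`-norm: if `{u_n}` is bounded in the
weighted norm `‖u‖_ε^p = [u]_{s,p}^p + ∫ V(εx)|u|^p` and `u_n → u` a.e., then
`‖u_n - u‖_ε^p - ‖u_n‖_ε^p + ‖u‖_ε^p → 0`. -/
theorem statement_3
    (N : ℕ) (s p : ℝ) (hs : s ∈ Ioo (0:ℝ) 1) (hp : 1 < p) (hN : s * p < N)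
    (V : EuclideanSpace ℝ (Fin N) → ℝ) (hVcont : Continuous V)
    (hV0 : 0 < ⨅ x, V x)
    (ε : ℝ) (hε : 0 < ε)
    (u : ℕ → EuclideanSpace ℝ (Fin N) → ℝ) (w : EuclideanSpace ℝ (Fin N) → ℝ)
    (hmeas : ∀ n, AEStronglyMeasurable (u n) volume)
    (hwmeas : AEStronglyMeasurable w volume)
    (hgag : ∀ n, GagliardoFinite N s p (u n))
    (hVint : ∀ n, Integrable (fun x => V (ε • x) * |u n x| ^ p) volume)
    (hwgag : GagliardoFinite N s p w)
    (hwVint : Integrable (fun x => V (ε • x) * |w x| ^ p) volume)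
    (hbdd : ∃ C : ℝ, ∀ n,
      gagliardoP N s p (u n) + ∫ x, V (ε • x) * |u n x| ^ p ≤ C)
    (hae : ∀ᵐ x ∂(volume : Measure (EuclideanSpace ℝ (Fin N))),
      Tendsto (fun n => u n x) atTop (𝓝 (w x))) :
    Tendsto (fun n =>
      (gagliardoP N s p (fun x => u n x - w x)
          + ∫ x, V (ε • x) * |u n x - w x| ^ p)
        - (gagliardoP N s p (u n) + ∫ x, V (ε • x) * |u n x| ^ p)
        + (gagliardoP N s p w + ∫ x, V (ε • x) * |w x| ^ p))
      atTop (𝓝 0) := by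
  have hp0 : (0:ℝ) < p := lt_trans one_pos hp
  set b : ℝ := (N : ℝ) + s * p with hbdef
  have hb0 : 0 < b := by
    have : (0:ℝ) < s * p := mul_pos hs.1 hp0
    have hN0 : (0:ℝ) ≤ N := Nat.cast_nonneg N
    simp only [hbdef]; linarith
  -- V is bounded below by a positive constant
  have hVpos : ∀ x, 0 < V x := by
    intro x
    have hbb : BddBelow (range V) := by
      by_contra h
      rw [Real.iInf_of_not_bddBelow h] at hV0
      exact lt_irrefl _ hV0
    exact lt_of_lt_of_le hV0 (ciInf_le hbb x)
  -- densities
  set ρ₁ : (EuclideanSpace ℝ (Fin N)) → ℝ≥0 := fun x => (V (ε • x)).toNNReal with hρ₁def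
  have hρ₁meas : Measurable ρ₁ :=
    (hVcont.comp (continuous_const_smul ε)).measurable.real_toNNReal
  set ρ₂ : (EuclideanSpace ℝ (Fin N)) × (EuclideanSpace ℝ (Fin N)) → ℝ≥0 := fun z => ((dist z.1 z.2 ^ b)⁻¹).toNNReal with hρ₂def
  have hρ₂meas : Measurable ρ₂ := by
    have h1 : Continuous (fun z : (EuclideanSpace ℝ (Fin N)) × (EuclideanSpace ℝ (Fin N)) => dist z.1 z.2 ^ b) :=
      (continuous_fst.dist continuous_snd).rpow_const (fun z => Or.inr hb0.le)
    exact (h1.measurable.inv).real_toNNReal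
  set μ₁ : Measure (EuclideanSpace ℝ (Fin N)) := volume.withDensity (fun x => ρ₁ x) with hμ₁def
  set μ₂ : Measure ((EuclideanSpace ℝ (Fin N)) × (EuclideanSpace ℝ (Fin N))) := volume.withDensity (fun z => ρ₂ z) with hμ₂def
  -- translation of integrals
  have hsmul₁ : ∀ F : (EuclideanSpace ℝ (Fin N)) → ℝ, (fun x => ρ₁ x • F x) = fun x => V (ε • x) * F x := by
    intro F; funext x
    rw [NNReal.smul_def, Real.coe_toNNReal _ (hVpos (ε • x)).le, smul_eq_mul]
  have hsmul₂ : ∀ F : (EuclideanSpace ℝ (Fin N)) × (EuclideanSpace ℝ (Fin N)) → ℝ,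
      (fun z => ρ₂ z • F z) = fun z => F z / dist z.1 z.2 ^ b := by
    intro F; funext z
    rw [NNReal.smul_def, Real.coe_toNNReal _ (by positivity), smul_eq_mul, div_eq_mul_inv, mul_comm]
  have hint₁ : ∀ F : (EuclideanSpace ℝ (Fin N)) → ℝ, ∫ x, F x ∂μ₁ = ∫ x, V (ε • x) * F x := by
    intro F
    rw [hμ₁def, integral_withDensity_eq_integral_smul hρ₁meas, hsmul₁]
  have hint₂ : ∀ F : (EuclideanSpace ℝ (Fin N)) × (EuclideanSpace ℝ (Fin N)) → ℝ,
      ∫ z, F z ∂μ₂ = ∫ z, F z / dist z.1 z.2 ^ b := by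
    intro F
    rw [hμ₂def, integral_withDensity_eq_integral_smul hρ₂meas, hsmul₂]
  have hinti₁ : ∀ F : (EuclideanSpace ℝ (Fin N)) → ℝ,
      Integrable F μ₁ ↔ Integrable (fun x => V (ε • x) * F x) volume := by
    intro F
    rw [hμ₁def, integrable_withDensity_iff_integrable_smul hρ₁meas, hsmul₁]
  have hinti₂ : ∀ F : (EuclideanSpace ℝ (Fin N)) × (EuclideanSpace ℝ (Fin N)) → ℝ,
      Integrable F μ₂ ↔ Integrable (fun z => F z / dist z.1 z.2 ^ b) volume := by
    intro F
    rw [hμ₂def, integrable_withDensity_iff_integrable_smul hρ₂meas, hsmul₂]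
  -- absolute continuity
  have hac₁ : μ₁ ≪ (volume : Measure (EuclideanSpace ℝ (Fin N))) := withDensity_absolutelyContinuous _ _
  have hac₂ : μ₂ ≪ (volume : Measure ((EuclideanSpace ℝ (Fin N)) × (EuclideanSpace ℝ (Fin N)))) := withDensity_absolutelyContinuous _ _
  -- the sequences for the two applications
  set f₂ : ℕ → (EuclideanSpace ℝ (Fin N)) × (EuclideanSpace ℝ (Fin N)) → ℝ := fun n z => u n z.1 - u n z.2 with hf₂def
  set g₂ : (EuclideanSpace ℝ (Fin N)) × (EuclideanSpace ℝ (Fin N)) → ℝ := fun z => w z.1 - w z.2 with hg₂def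
  -- measurability on the product
  have hprod_meas : ∀ (v : (EuclideanSpace ℝ (Fin N)) → ℝ), AEStronglyMeasurable v volume →
      AEStronglyMeasurable (fun z : (EuclideanSpace ℝ (Fin N)) × (EuclideanSpace ℝ (Fin N)) => v z.1 - v z.2) volume := by
    intro v hv
    rw [Measure.volume_eq_prod]
    exact (hv.comp_quasiMeasurePreserving Measure.quasiMeasurePreserving_fst).sub
      (hv.comp_quasiMeasurePreserving Measure.quasiMeasurePreserving_snd)
  -- a.e. convergence on the product
  have hae₂ : ∀ᵐ z ∂(volume : Measure ((EuclideanSpace ℝ (Fin N)) × (EuclideanSpace ℝ (Fin N)))),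
      Tendsto (fun n => f₂ n z) atTop (𝓝 (g₂ z)) := by
    rw [Measure.volume_eq_prod]
    have h1 := Measure.quasiMeasurePreserving_fst
      (μ := (volume : Measure (EuclideanSpace ℝ (Fin N)))) (ν := (volume : Measure (EuclideanSpace ℝ (Fin N)))) |>.ae hae
    have h2 := Measure.quasiMeasurePreserving_snd
      (μ := (volume : Measure (EuclideanSpace ℝ (Fin N)))) (ν := (volume : Measure (EuclideanSpace ℝ (Fin N)))) |>.ae hae
    filter_upwards [h1, h2] with z hz1 hz2
    exact hz1.sub hz2
  -- nonnegativity facts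
  have hgag_nonneg : ∀ v : (EuclideanSpace ℝ (Fin N)) → ℝ, 0 ≤ gagliardoP N s p v := by
    intro v
    exact integral_nonneg fun z => div_nonneg (Real.rpow_nonneg (abs_nonneg _) _)
      (Real.rpow_nonneg dist_nonneg _)
  have hVint_nonneg : ∀ v : (EuclideanSpace ℝ (Fin N)) → ℝ, 0 ≤ ∫ x, V (ε • x) * |v x| ^ p := by
    intro v
    exact integral_nonneg fun x => mul_nonneg (hVpos _).le
      (Real.rpow_nonneg (abs_nonneg _) _)
  obtain ⟨C, hC⟩ := hbdd
  -- identify the norms with integrals over μ₁, μ₂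
  have hgagP : ∀ v : (EuclideanSpace ℝ (Fin N)) → ℝ, gagliardoP N s p v
      = ∫ z, |v z.1 - v z.2| ^ p ∂μ₂ := by
    intro v
    rw [hint₂ (fun z => |v z.1 - v z.2| ^ p), gagliardoP, ← hbdef]
  have hVP : ∀ v : (EuclideanSpace ℝ (Fin N)) → ℝ, (∫ x, V (ε • x) * |v x| ^ p)
      = ∫ x, |v x| ^ p ∂μ₁ := by
    intro v
    rw [hint₁ (fun x => |v x| ^ p)]
  -- first application : μ₁
  have T₁ := brezisLieb μ₁ hp u w
    (fun n => (hmeas n).mono_ac hac₁) (hwmeas.mono_ac hac₁)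
    (fun n => (hinti₁ _).2 (hVint n)) ((hinti₁ _).2 hwVint)
    (C := C)
    (fun n => by
      rw [← hVP (u n)]
      have := hC n
      have := hgag_nonneg (u n)
      linarith)
    (hac₁.ae_le hae)
  -- second application : μ₂
  have T₂ := brezisLieb μ₂ hp f₂ g₂
    (fun n => ((hprod_meas (u n) (hmeas n))).mono_ac hac₂)
    ((hprod_meas w hwmeas).mono_ac hac₂)
    (fun n => (hinti₂ _).2 (hgag n)) ((hinti₂ _).2 hwgag)
    (C := C)
    (fun n => by
      rw [show (∫ z, |f₂ n z| ^ p ∂μ₂) = gagliardoP N s p (u n) from (hgagP (u n)).symm]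
      have := hC n
      have := hVint_nonneg (u n)
      linarith)
    (hac₂.ae_le hae₂)
  have Tsum := T₂.add T₁
  rw [add_zero] at Tsum
  refine Tendsto.congr (fun n => ?_) Tsum
  have e1 : gagliardoP N s p (fun x => u n x - w x)
      = ∫ z, |f₂ n z - g₂ z| ^ p ∂μ₂ := by
    rw [hgagP]
    congr 1
    funext z
    rw [hf₂def, hg₂def]
    dsimp only
    rw [show (u n z.1 - w z.1) - (u n z.2 - w z.2)
        = (u n z.1 - u n z.2) - (w z.1 - w z.2) by ring]
  have e2 : (∫ x, V (ε • x) * |u n x - w x| ^ p)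
      = ∫ x, |u n x - w x| ^ p ∂μ₁ := hVP _
  rw [e1, e2, hgagP (u n), hgagP w, hVP (u n), hVP w]
  ring
end
end

section
/- Let p ≥ 2 be a real number. For every ε > 0 there exists C_ε > 0 such that for all real numbers a and b, | |a+b|^{p−2}(a+b) − |a|^{p−2}a | ≤ ε|a|^{p−1} + C_ε|b|^{p−1}. -/
open Real

private lemma pow_prod (p : ℝ) (hp : 2 ≤ p) (x : ℝ) :
    |x| ^ (p - 2) * |x| = |x| ^ (p - 1) := by
  have he : p - 1 = p - 2 + 1 := by ring
  rcases eq_or_ne x 0 with h | h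
  · simp [h, Real.zero_rpow (show p - 1 ≠ 0 by intro h'; nlinarith)]
  · rw [he, Real.rpow_add_one (abs_ne_zero.mpr h)]

private lemma aux_pos (p : ℝ) (hp : 2 ≤ p) (a b : ℝ) (ha : 0 < a) (hb : |b| ≤ a / 2) :
    |(|a + b| ^ (p - 2) * (a + b)) - (|a| ^ (p - 2) * a)| ≤ (p - 1) * (2 * a) ^ (p - 2) * |b| := by
  have hb1 : a / 2 ≤ a + b := by have := abs_le.mp hb; linarith [this.1]
  have hb2 : a + b ≤ 2 * a := by have := abs_le.mp hb; linarith [this.2]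
  set s : Set ℝ := Set.Icc (a / 2) (2 * a) with hs
  have hpos : ∀ t ∈ s, 0 < t := fun t ht => lt_of_lt_of_le (by linarith) ht.1
  have hderiv : ∀ t ∈ s, HasDerivWithinAt (fun x : ℝ => x ^ (p - 1))
      ((p - 1) * t ^ (p - 2)) s t := by
    intro t ht
    have h := (Real.hasDerivAt_rpow_const (p := p - 1) (x := t)
      (Or.inr (by linarith))).hasDerivWithinAt (s := s)
    rw [show p - 1 - 1 = p - 2 by ring] at h
    exact h
  have hbound : ∀ t ∈ s, ‖(p - 1) * t ^ (p - 2)‖ ≤ (p - 1) * (2 * a) ^ (p - 2) := by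
    intro t ht
    have ht0 := hpos t ht
    rw [Real.norm_eq_abs,
      abs_of_nonneg (mul_nonneg (by linarith) (Real.rpow_nonneg ht0.le _))]
    exact mul_le_mul_of_nonneg_left
      (Real.rpow_le_rpow ht0.le ht.2 (by linarith)) (by linarith)
  have key := Convex.norm_image_sub_le_of_norm_hasDerivWithin_le hderiv hbound
    (convex_Icc _ _) (Set.mem_Icc.mpr ⟨by linarith, by linarith⟩ : a ∈ s)
    (Set.mem_Icc.mpr ⟨hb1, hb2⟩ : a + b ∈ s)
  have heq : ∀ t : ℝ, 0 < t → |t| ^ (p - 2) * t = t ^ (p - 1) := by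
    intro t ht
    rw [abs_of_pos ht, show p - 1 = p - 2 + 1 by ring, Real.rpow_add_one ht.ne']
  have hab : 0 < a + b := lt_of_lt_of_le (by linarith) hb1
  rw [heq _ hab, heq _ ha]
  simpa [Real.norm_eq_abs, add_sub_cancel_left] using key

private lemma aux (p : ℝ) (hp : 2 ≤ p) (a b : ℝ) (ha : a ≠ 0) (hb : |b| ≤ |a| / 2) :
    |(|a + b| ^ (p - 2) * (a + b)) - (|a| ^ (p - 2) * a)| ≤ (p - 1) * (2 * |a|) ^ (p - 2) * |b| := by
  rcases lt_or_gt_of_ne ha with hneg | hpos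
  · have hb' : |(-b)| ≤ (-a) / 2 := by rw [abs_neg]; rwa [abs_of_neg hneg] at hb
    have h := aux_pos p hp (-a) (-b) (by linarith) hb'
    rw [show (-a) + (-b) = -(a + b) by ring] at h
    simp only [abs_neg] at h
    have e : |a + b| ^ (p - 2) * -(a + b) - |a| ^ (p - 2) * (-a)
        = -(|a + b| ^ (p - 2) * (a + b) - |a| ^ (p - 2) * a) := by ring
    rw [e, abs_neg] at h
    have e2 : (2:ℝ) * |a| = 2 * (-a) := by rw [abs_of_neg hneg]
    rw [e2]
    exact h
  · have h := aux_pos p hp a b hpos (by rwa [abs_of_pos hpos] at hb)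
    have e2 : (2:ℝ) * |a| = 2 * a := by rw [abs_of_pos hpos]
    rw [e2]
    exact h

/-- Let `p ≥ 2` be a real number. For every `ε > 0` there exists `C_ε > 0`
such that for all real `a, b`:
`| |a+b|^(p-2)(a+b) - |a|^(p-2)a | ≤ ε|a|^(p-1) + C_ε|b|^(p-1)`.
Here `|t|^(p-2)` is real-power (`rpow`), so `|t|^(p-2) * t = 0` when `t = 0`. -/
theorem statement_5 (p : ℝ) (hp : 2 ≤ p) :
    ∀ ε : ℝ, 0 < ε → ∃ C : ℝ, 0 < C ∧ ∀ a b : ℝ,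
      abs (|a + b| ^ (p - 2) * (a + b) - |a| ^ (p - 2) * a) ≤
        ε * |a| ^ (p - 1) + C * |b| ^ (p - 1) := by
  intro ε hε
  have hK : (0:ℝ) < (p - 1) * 2 ^ (p - 2) := by
    have : (0:ℝ) < (2:ℝ) ^ (p - 2) := Real.rpow_pos_of_pos (by norm_num) _
    nlinarith
  set δ : ℝ := min (1/2) (ε / ((p - 1) * 2 ^ (p - 2))) with hδdef
  have hδ0 : 0 < δ := lt_min (by norm_num) (div_pos hε hK)
  have hδhalf : δ ≤ 1/2 := min_le_left _ _
  have hδε : (p - 1) * 2 ^ (p - 2) * δ ≤ ε := by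
    have := min_le_right (1/2) (ε / ((p - 1) * 2 ^ (p - 2)))
    calc (p - 1) * 2 ^ (p - 2) * δ ≤ (p - 1) * 2 ^ (p - 2) * (ε / ((p - 1) * 2 ^ (p - 2))) :=
          mul_le_mul_of_nonneg_left this hK.le
      _ = ε := by field_simp [show p - 1 ≠ 0 by linarith]
  refine ⟨(1/δ + 1) ^ (p - 1) + (1/δ) ^ (p - 1), by positivity, fun a b => ?_⟩
  have habs : ∀ x : ℝ, |(|x| ^ (p - 2) * x)| = |x| ^ (p - 1) := by
    intro x
    rw [abs_mul, abs_of_nonneg (Real.rpow_nonneg (abs_nonneg x) _), pow_prod p hp]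
  by_cases hc : |b| ≤ δ * |a|
  · -- small b case
    rcases eq_or_ne a 0 with rfl | ha
    · have : b = 0 := by
        have : |b| ≤ 0 := by simpa using hc
        exact abs_eq_zero.mp (le_antisymm this (abs_nonneg b))
      simp only [this, add_zero, sub_self, abs_zero]
      positivity
    · have hb2 : |b| ≤ |a| / 2 := hc.trans (by
        have : 0 < |a| := abs_pos.mpr ha
        nlinarith)
      have h := aux p hp a b ha hb2
      have ha0 : 0 < |a| := abs_pos.mpr ha
      have step : (p - 1) * (2 * |a|) ^ (p - 2) * |b| ≤ ε * |a| ^ (p - 1) := by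
        rw [Real.mul_rpow (by norm_num) (abs_nonneg a)]
        calc (p - 1) * (2 ^ (p - 2) * |a| ^ (p - 2)) * |b|
            ≤ (p - 1) * (2 ^ (p - 2) * |a| ^ (p - 2)) * (δ * |a|) := by
              apply mul_le_mul_of_nonneg_left hc
              have h1 : (0:ℝ) ≤ (2:ℝ) ^ (p - 2) := Real.rpow_nonneg (by norm_num) _
              have h2 : (0:ℝ) ≤ |a| ^ (p - 2) := Real.rpow_nonneg (abs_nonneg a) _
              nlinarith
          _ = ((p - 1) * 2 ^ (p - 2) * δ) * (|a| ^ (p - 2) * |a|) := by ring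
          _ ≤ ε * (|a| ^ (p - 2) * |a|) := by
              apply mul_le_mul_of_nonneg_right hδε
              positivity
          _ = ε * |a| ^ (p - 1) := by rw [pow_prod p hp]
      have hC : 0 ≤ ((1/δ + 1) ^ (p - 1) + (1/δ) ^ (p - 1)) * |b| ^ (p - 1) := by positivity
      linarith [h.trans step]
  · -- large b case
    push_neg at hc
    have hba : |a| ≤ (1/δ) * |b| := by
      rw [div_mul_eq_mul_div, le_div_iff₀ hδ0, one_mul, mul_comm]
      exact hc.le
    have h1 : |(|a + b| ^ (p - 2) * (a + b) - |a| ^ (p - 2) * a)| ≤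
        |a + b| ^ (p - 1) + |a| ^ (p - 1) := by
      calc _ ≤ |(|a + b| ^ (p - 2) * (a + b))| + |(|a| ^ (p - 2) * a)| := abs_sub _ _
        _ = |a + b| ^ (p - 1) + |a| ^ (p - 1) := by rw [habs, habs]
    have h2 : |a + b| ^ (p - 1) ≤ (1/δ + 1) ^ (p - 1) * |b| ^ (p - 1) := by
      rw [← Real.mul_rpow (by positivity) (abs_nonneg b)]
      apply Real.rpow_le_rpow (abs_nonneg _) _ (by linarith)
      calc |a + b| ≤ |a| + |b| := abs_add_le a b
        _ ≤ (1/δ) * |b| + |b| := by linarith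
        _ = (1/δ + 1) * |b| := by ring
    have h3 : |a| ^ (p - 1) ≤ (1/δ) ^ (p - 1) * |b| ^ (p - 1) := by
      rw [← Real.mul_rpow (by positivity) (abs_nonneg b)]
      exact Real.rpow_le_rpow (abs_nonneg _) hba (by linarith)
    have h4 : 0 ≤ ε * |a| ^ (p - 1) := by positivity
    calc |(|a + b| ^ (p - 2) * (a + b) - |a| ^ (p - 2) * a)|
        ≤ |a + b| ^ (p - 1) + |a| ^ (p - 1) := h1
      _ ≤ (1/δ + 1) ^ (p - 1) * |b| ^ (p - 1) + (1/δ) ^ (p - 1) * |b| ^ (p - 1) := by linarith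
      _ = ((1/δ + 1) ^ (p - 1) + (1/δ) ^ (p - 1)) * |b| ^ (p - 1) := by ring
      _ ≤ ε * |a| ^ (p - 1) + ((1/δ + 1) ^ (p - 1) + (1/δ) ^ (p - 1)) * |b| ^ (p - 1) := by linarith
end

section
/- Let f : ℝ → ℝ be continuous with f(t) = 0 for t ≤ 0, and suppose that for every δ > 0 there exists C_δ > 0 such that |f(t)| ≤ δ|t|^{p−1} + C_δ|t|^{p*_s−1} for all t ∈ ℝ; set F(t) = ∫_0^t f(τ)dτ. Let {u_n} be a sequence of measurable functions on ℝ^N which is bounded in L^p(ℝ^N) and in L^{p*_s}(ℝ^N), converging almost everywhere to a function u ∈ L^p(ℝ^N) ∩ L^{p*_s}(ℝ^N), and set v_n = u_n − u. Then ∫_{ℝ^N} ( F(v_n) − F(u_n) + F(u) ) dx → 0 as n → ∞. -/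
open MeasureTheory Filter Topology Metric Set

noncomputable section

/-- Young's inequality with a small parameter. -/
lemma bl_young_param {p : ℝ} (hp : 1 < p) {η : ℝ} (hη : 0 < η) :
    ∃ K : ℝ, 0 < K ∧ ∀ x y : ℝ, 0 ≤ x → 0 ≤ y →
      x * y ^ (p - 1) ≤ η * y ^ p + K * x ^ p := by
  have hpq : p.HolderConjugate (Real.conjExponent p) := Real.HolderConjugate.conjExponent hp
  set q := Real.conjExponent p with hqdef
  have hq0 : 0 < q := hpq.symm.pos
  have hp0 : 0 < p := hpq.pos
  have hp1ne : p - 1 ≠ 0 := sub_ne_zero.mpr (ne_of_gt hp)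
  set c : ℝ := ((η * q)⁻¹) ^ q⁻¹ with hcdef
  have hc0 : 0 < c := Real.rpow_pos_of_pos (by positivity) _
  have hcq : c ^ q = (η * q)⁻¹ := Real.rpow_inv_rpow (by positivity) (ne_of_gt hq0)
  refine ⟨c ^ p / p, by positivity, fun x y hx hy => ?_⟩
  have key : (x * c) * (y ^ (p - 1) / c) ≤ (x * c) ^ p / p + (y ^ (p - 1) / c) ^ q / q :=
    Real.young_inequality_of_nonneg (by positivity) (by positivity) hpq
  have h1 : (x * c) * (y ^ (p - 1) / c) = x * y ^ (p - 1) := by field_simp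
  have h2 : (x * c) ^ p = x ^ p * c ^ p := Real.mul_rpow hx hc0.le
  have hpexp : (p - 1) * q = p := by
    rw [hqdef, Real.conjExponent]; field_simp
  have h3 : (y ^ (p - 1) / c) ^ q = y ^ p / (η * q)⁻¹ := by
    rw [Real.div_rpow (Real.rpow_nonneg hy _) hc0.le, ← Real.rpow_mul hy, hpexp, hcq]
  have h4 : y ^ p / (η * q)⁻¹ / q = η * y ^ p := by
    field_simp
  calc x * y ^ (p - 1) = (x * c) * (y ^ (p - 1) / c) := h1.symm
    _ ≤ (x * c) ^ p / p + (y ^ (p - 1) / c) ^ q / q := key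
    _ = η * y ^ p + (c ^ p / p) * x ^ p := by rw [h2, h3, h4]; ring

/-- `(x+y)^r ≤ 2^r (x^r + y^r)` for nonneg reals and `r ≥ 0`. -/
lemma bl_add_rpow_le {r x y : ℝ} (hr : 0 ≤ r) (hx : 0 ≤ x) (hy : 0 ≤ y) :
    (x + y) ^ r ≤ 2 ^ r * (x ^ r + y ^ r) := by
  have h1 : x + y ≤ 2 * max x y := by
    rcases le_total x y with h | h
    · simp [max_eq_right h]; linarith
    · simp [max_eq_left h]; linarith
  have hmax : 0 ≤ max x y := le_max_of_le_left hx
  calc (x + y) ^ r ≤ (2 * max x y) ^ r :=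
        Real.rpow_le_rpow (by positivity) h1 hr
    _ = 2 ^ r * (max x y) ^ r := Real.mul_rpow (by norm_num) hmax
    _ ≤ 2 ^ r * (x ^ r + y ^ r) := by
        apply mul_le_mul_of_nonneg_left _ (Real.rpow_nonneg (by norm_num) _)
        rcases le_total x y with h | h
        · rw [max_eq_right h]
          have := Real.rpow_nonneg hx r
          linarith
        · rw [max_eq_left h]
          have := Real.rpow_nonneg hy r
          linarith

lemma bl_mul_rpow_sub {x r : ℝ} (hx : 0 ≤ x) (hr : 0 < r) :
    x * x ^ (r - 1) = x ^ r := by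
  rcases eq_or_lt_of_le hx with h | h
  · rw [← h, zero_mul, Real.zero_rpow (ne_of_gt hr)]
  · nth_rewrite 1 [← Real.rpow_one x]
    rw [← Real.rpow_add h]
    ring_nf

/-- Core bound on differences of the primitive. -/
lemma bl_Fdiff {p ps : ℝ} (hp : 1 < p) (hps : 1 < ps) {f F : ℝ → ℝ}
    (hfcont : Continuous f) {δ C : ℝ} (hδ : 0 ≤ δ) (hC : 0 ≤ C)
    (hfb : ∀ t : ℝ, |f t| ≤ δ * |t| ^ (p - 1) + C * |t| ^ (ps - 1))
    (hF : ∀ t, F t = ∫ τ in (0:ℝ)..t, f τ) (a b : ℝ) :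
    |F (a + b) - F a| ≤ |b| * (δ * (|a| + |b|) ^ (p - 1) + C * (|a| + |b|) ^ (ps - 1)) := by
  have hint : ∀ c d : ℝ, IntervalIntegrable f volume c d := fun c d =>
    hfcont.intervalIntegrable c d
  have hsub : F (a + b) - F a = ∫ τ in a..(a + b), f τ := by
    rw [hF, hF]
    exact intervalIntegral.integral_interval_sub_left (hint 0 (a + b)) (hint 0 a)
  rw [hsub]
  have hbound : ∀ x ∈ Set.uIoc a (a + b), ‖f x‖ ≤
      δ * (|a| + |b|) ^ (p - 1) + C * (|a| + |b|) ^ (ps - 1) := by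
    intro x hx
    have hxabs : |x| ≤ |a| + |b| := by
      rcases hx with ⟨h1, h2⟩
      rw [abs_le]
      constructor
      · have : -(|a| + |b|) ≤ min a (a + b) := by
          rcases abs_le.mp (le_refl |a|) with ⟨ha1, ha2⟩
          rcases abs_le.mp (le_refl |b|) with ⟨hb1, hb2⟩
          rcases le_total a (a + b) with h | h
          · rw [min_eq_left h]; linarith
          · rw [min_eq_right h]; linarith
        linarith [this.trans h1.le]
      · have : max a (a + b) ≤ |a| + |b| := by
          rcases abs_le.mp (le_refl |a|) with ⟨ha1, ha2⟩
          rcases abs_le.mp (le_refl |b|) with ⟨hb1, hb2⟩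
          rcases le_total a (a + b) with h | h
          · rw [max_eq_right h]; linarith
          · rw [max_eq_left h]; linarith
        linarith [h2.trans this]
    rw [Real.norm_eq_abs]
    refine (hfb x).trans ?_
    have h1 : |x| ^ (p - 1) ≤ (|a| + |b|) ^ (p - 1) :=
      Real.rpow_le_rpow (abs_nonneg x) hxabs (by linarith)
    have h2 : |x| ^ (ps - 1) ≤ (|a| + |b|) ^ (ps - 1) :=
      Real.rpow_le_rpow (abs_nonneg x) hxabs (by linarith)
    have := mul_le_mul_of_nonneg_left h1 hδ
    have := mul_le_mul_of_nonneg_left h2 hC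
    linarith
  calc ‖∫ τ in a..(a + b), f τ‖ ≤
      (δ * (|a| + |b|) ^ (p - 1) + C * (|a| + |b|) ^ (ps - 1)) * |a + b - a| :=
        intervalIntegral.norm_integral_le_of_norm_le_const hbound
    _ = |b| * (δ * (|a| + |b|) ^ (p - 1) + C * (|a| + |b|) ^ (ps - 1)) := by
        rw [add_sub_cancel_left]; ring

/-- The main pointwise estimate: for every `ε > 0` there is `C > 0` with
`|F(a+b) - F(a)| ≤ ε (|a|^p + |a|^ps) + C (|b|^p + |b|^ps)`. -/
lemma bl_pointwise {p ps : ℝ} (hp : 1 < p) (hps : 1 < ps) {f F : ℝ → ℝ}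
    (hfcont : Continuous f)
    (hfgrowth : ∀ δ : ℝ, 0 < δ → ∃ C : ℝ, 0 < C ∧
      ∀ t : ℝ, |f t| ≤ δ * |t| ^ (p - 1) + C * |t| ^ (ps - 1))
    (hF : ∀ t, F t = ∫ τ in (0:ℝ)..t, f τ) {ε : ℝ} (hε : 0 < ε) :
    ∃ C : ℝ, 0 < C ∧ ∀ a b : ℝ,
      |F (a + b) - F a| ≤ ε * (|a| ^ p + |a| ^ ps) + C * (|b| ^ p + |b| ^ ps) := by
  obtain ⟨C1, hC1, hfb⟩ := hfgrowth 1 one_pos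
  set A : ℝ := 2 ^ (p - 1) with hA
  set B : ℝ := 2 ^ (ps - 1) with hB
  have hA0 : 0 < A := Real.rpow_pos_of_pos (by norm_num) _
  have hB0 : 0 < B := Real.rpow_pos_of_pos (by norm_num) _
  obtain ⟨K1, hK10, hK1⟩ := bl_young_param hp (show (0:ℝ) < ε / A by positivity)
  obtain ⟨K2, hK20, hK2⟩ := bl_young_param hps (show (0:ℝ) < ε / (C1 * B) by positivity)
  refine ⟨A * (K1 + 1) + C1 * B * (K2 + 1), by positivity, fun a b => ?_⟩
  have hcore := bl_Fdiff hp hps hfcont (le_of_lt one_pos) hC1.le hfb hF a b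
  have habk : 0 ≤ |a| := abs_nonneg a
  have hbbk : 0 ≤ |b| := abs_nonneg b
  have h2p : (|a| + |b|) ^ (p - 1) ≤ A * (|a| ^ (p - 1) + |b| ^ (p - 1)) :=
    bl_add_rpow_le (by linarith) habk hbbk
  have h2ps : (|a| + |b|) ^ (ps - 1) ≤ B * (|a| ^ (ps - 1) + |b| ^ (ps - 1)) :=
    bl_add_rpow_le (by linarith) habk hbbk
  have hy1 : |b| * |a| ^ (p - 1) ≤ (ε / A) * |a| ^ p + K1 * |b| ^ p := hK1 _ _ hbbk habk
  have hy2 : |b| * |a| ^ (ps - 1) ≤ (ε / (C1 * B)) * |a| ^ ps + K2 * |b| ^ ps :=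
    hK2 _ _ hbbk habk
  have hbb1 : |b| * |b| ^ (p - 1) = |b| ^ p := bl_mul_rpow_sub hbbk (by linarith)
  have hbb2 : |b| * |b| ^ (ps - 1) = |b| ^ ps := bl_mul_rpow_sub hbbk (by linarith)
  have step1 : |F (a + b) - F a| ≤
      |b| * (1 * (A * (|a| ^ (p - 1) + |b| ^ (p - 1))) +
        C1 * (B * (|a| ^ (ps - 1) + |b| ^ (ps - 1)))) := by
    refine hcore.trans ?_
    apply mul_le_mul_of_nonneg_left _ hbbk
    have := mul_le_mul_of_nonneg_left h2p (le_of_lt one_pos)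
    have := mul_le_mul_of_nonneg_left h2ps hC1.le
    linarith
  have step2 : |b| * (1 * (A * (|a| ^ (p - 1) + |b| ^ (p - 1))) +
        C1 * (B * (|a| ^ (ps - 1) + |b| ^ (ps - 1)))) =
      A * (|b| * |a| ^ (p - 1)) + A * |b| ^ p +
        C1 * B * (|b| * |a| ^ (ps - 1)) + C1 * B * |b| ^ ps := by
    rw [← hbb1, ← hbb2]; ring
  have hAe : A * (ε / A) = ε := by field_simp
  have hBe : C1 * B * (ε / (C1 * B)) = ε := by field_simp
  have hya := mul_le_mul_of_nonneg_left hy1 hA0.le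
  have hyb := mul_le_mul_of_nonneg_left hy2 (by positivity : (0:ℝ) ≤ C1 * B)
  have hbp : 0 ≤ |b| ^ p := Real.rpow_nonneg hbbk _
  have hbps : 0 ≤ |b| ^ ps := Real.rpow_nonneg hbbk _
  calc |F (a + b) - F a| ≤
      A * (|b| * |a| ^ (p - 1)) + A * |b| ^ p +
        C1 * B * (|b| * |a| ^ (ps - 1)) + C1 * B * |b| ^ ps := by
        rw [← step2]; exact step1
    _ ≤ (A * ((ε / A) * |a| ^ p + K1 * |b| ^ p)) + A * |b| ^ p +
        (C1 * B * ((ε / (C1 * B)) * |a| ^ ps + K2 * |b| ^ ps)) + C1 * B * |b| ^ ps := by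
        linarith
    _ ≤ ε * (|a| ^ p + |a| ^ ps) + (A * (K1 + 1) + C1 * B * (K2 + 1)) * (|b| ^ p + |b| ^ ps) := by
        have e1 : A * ((ε / A) * |a| ^ p) = ε * |a| ^ p := by
          rw [← mul_assoc, hAe]
        have e2 : C1 * B * ((ε / (C1 * B)) * |a| ^ ps) = ε * |a| ^ ps := by
          rw [← mul_assoc, hBe]
        nlinarith [mul_nonneg hA0.le hbps, mul_nonneg (mul_nonneg hC1.le hB0.le) hbp,
          mul_nonneg (mul_nonneg hA0.le hK10.le) hbps,
          mul_nonneg (mul_nonneg (mul_nonneg hC1.le hB0.le) hK20.le) hbp]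

lemma bl_Fbound {p ps : ℝ} (hp : 1 < p) (hps : 1 < ps) {f F : ℝ → ℝ}
    (hfcont : Continuous f) {C : ℝ} (hC : 0 ≤ C)
    (hfb : ∀ t : ℝ, |f t| ≤ 1 * |t| ^ (p - 1) + C * |t| ^ (ps - 1))
    (hF : ∀ t, F t = ∫ τ in (0:ℝ)..t, f τ) (t : ℝ) :
    |F t| ≤ |t| ^ p + C * |t| ^ ps := by
  have h := bl_Fdiff hp hps hfcont (le_of_lt one_pos) hC hfb hF 0 t
  have hF0 : F 0 = 0 := by rw [hF]; exact intervalIntegral.integral_same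
  rw [zero_add, hF0, sub_zero, abs_zero, zero_add] at h
  refine h.trans_eq ?_
  rw [mul_add, one_mul, bl_mul_rpow_sub (abs_nonneg t) (by linarith)]
  rw [show |t| * (C * |t| ^ (ps - 1)) = C * (|t| * |t| ^ (ps - 1)) by ring,
    bl_mul_rpow_sub (abs_nonneg t) (by linarith)]

/-- Brezis–Lieb for the primitive `F`: with `f` continuous, vanishing
on `(-∞,0]` and of subcritical–critical growth, `F(t) = ∫_0^t f`, if `{u_n}` is
bounded in `L^p ∩ L^{p*_s}` and converges a.e. to `u ∈ L^p ∩ L^{p*_s}`, then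
`∫ (F(u_n - u) - F(u_n) + F(u)) → 0`. -/
theorem statement_6
    (N : ℕ) (s p ps : ℝ) (hs : s ∈ Ioo (0:ℝ) 1) (hp : 1 < p) (hN : s * p < N)
    (hps : ps = N * p / (N - s * p))
    (f : ℝ → ℝ) (hfcont : Continuous f) (hfzero : ∀ t ≤ (0:ℝ), f t = 0)
    (hfgrowth : ∀ δ : ℝ, 0 < δ → ∃ C : ℝ, 0 < C ∧
      ∀ t : ℝ, |f t| ≤ δ * |t| ^ (p - 1) + C * |t| ^ (ps - 1))
    (F : ℝ → ℝ) (hF : ∀ t, F t = ∫ τ in (0:ℝ)..t, f τ)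
    (u : ℕ → EuclideanSpace ℝ (Fin N) → ℝ) (w : EuclideanSpace ℝ (Fin N) → ℝ)
    (hmeas : ∀ n, AEStronglyMeasurable (u n) volume)
    (hwp : MemLp w (ENNReal.ofReal p) volume)
    (hwps : MemLp w (ENNReal.ofReal ps) volume)
    (hbdd : ∃ C : ENNReal, C < ⊤ ∧ ∀ n,
      eLpNorm (u n) (ENNReal.ofReal p) volume ≤ C ∧
      eLpNorm (u n) (ENNReal.ofReal ps) volume ≤ C)
    (hae : ∀ᵐ x ∂(volume : Measure (EuclideanSpace ℝ (Fin N))),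
      Tendsto (fun n => u n x) atTop (𝓝 (w x))) :
    Tendsto (fun n => ∫ x, (F (u n x - w x) - F (u n x) + F (w x)))
      atTop (𝓝 0) := by
  classical
  obtain ⟨C0, hC0top, hC0⟩ := hbdd
  have hp0 : 0 < p := lt_trans one_pos hp
  have hsp0 : 0 < s * p := mul_pos hs.1 hp0
  have hNsp : 0 < (N : ℝ) - s * p := sub_pos.mpr hN
  have hpsp : p < ps := by
    rw [hps, lt_div_iff₀ hNsp]
    nlinarith
  have hps1 : 1 < ps := lt_trans hp hpsp
  have hps0 : 0 < ps := lt_trans one_pos hps1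
  set P := ENNReal.ofReal p with hPdef
  set Q := ENNReal.ofReal ps with hQdef
  have hP1 : 1 ≤ P := ENNReal.one_le_ofReal.mpr hp.le
  have hQ1 : 1 ≤ Q := ENNReal.one_le_ofReal.mpr hps1.le
  have hup : ∀ n, MemLp (u n) P volume := fun n => ⟨hmeas n, lt_of_le_of_lt (hC0 n).1 hC0top⟩
  have hups : ∀ n, MemLp (u n) Q volume := fun n => ⟨hmeas n, lt_of_le_of_lt (hC0 n).2 hC0top⟩
  set v : ℕ → EuclideanSpace ℝ (Fin N) → ℝ := fun n x => u n x - w x with hvdef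
  have hvmeas : ∀ n, AEStronglyMeasurable (v n) volume := fun n => (hmeas n).sub hwp.1
  have hvp : ∀ n, MemLp (v n) P volume := fun n => (hup n).sub hwp
  have hvps : ∀ n, MemLp (v n) Q volume := fun n => (hups n).sub hwps
  -- integrability of |g|^r for g ∈ L^r
  have hint_rpow : ∀ (g : EuclideanSpace ℝ (Fin N) → ℝ) (r : ℝ), 0 < r →
      MemLp g (ENNReal.ofReal r) volume → Integrable (fun x => |g x| ^ r) volume := by
    intro g r hr hg
    have := hg.integrable_norm_rpow
      (by simp [ENNReal.ofReal_eq_zero, not_le, hr]) ENNReal.ofReal_ne_top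
    simpa [Real.norm_eq_abs, ENNReal.toReal_ofReal hr.le] using this
  have hint_eq : ∀ (g : EuclideanSpace ℝ (Fin N) → ℝ) (r : ℝ), 0 < r →
      MemLp g (ENNReal.ofReal r) volume →
      ∫ x, |g x| ^ r = ((eLpNorm g (ENNReal.ofReal r) volume).toReal) ^ r := by
    intro g r hr hg
    have h := hg.eLpNorm_eq_integral_rpow_norm
      (by simp [ENNReal.ofReal_eq_zero, not_le, hr]) ENNReal.ofReal_ne_top
    rw [ENNReal.toReal_ofReal hr.le] at h
    have hnn : 0 ≤ ∫ x, ‖g x‖ ^ r := integral_nonneg fun x => Real.rpow_nonneg (norm_nonneg _) _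
    rw [h, ENNReal.toReal_ofReal (Real.rpow_nonneg hnn _), Real.rpow_inv_rpow hnn (ne_of_gt hr)]
    simp [Real.norm_eq_abs]
  -- continuity and bounds for F
  have hFcont : Continuous F := by
    have hFe : F = fun t => ∫ τ in (0:ℝ)..t, f τ := funext hF
    rw [hFe]
    exact intervalIntegral.continuous_primitive (fun a b => hfcont.intervalIntegrable a b) 0
  have hF0 : F 0 = 0 := by rw [hF]; exact intervalIntegral.integral_same
  obtain ⟨C1, hC1, hfb1⟩ := hfgrowth 1 one_pos
  have hFle : ∀ t, |F t| ≤ |t| ^ p + C1 * |t| ^ ps := bl_Fbound hp hps1 hfcont hC1.le hfb1 hF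
  have hFint : ∀ (g : EuclideanSpace ℝ (Fin N) → ℝ), AEStronglyMeasurable g volume →
      MemLp g P volume → MemLp g Q volume → Integrable (fun x => F (g x)) volume := by
    intro g hgm hgp hgq
    refine Integrable.mono' ((hint_rpow g p hp0 hgp).add ((hint_rpow g ps hps0 hgq).const_mul C1))
      (hFcont.comp_aestronglyMeasurable hgm) ?_
    filter_upwards with x
    rw [Real.norm_eq_abs]
    exact hFle (g x)
  set I : ℕ → EuclideanSpace ℝ (Fin N) → ℝ :=
    fun n x => F (u n x - w x) - F (u n x) + F (w x) with hIdef
  have hIint : ∀ n, Integrable (I n) volume := fun n =>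
    ((hFint (v n) (hvmeas n) (hvp n) (hvps n)).sub
      (hFint (u n) (hmeas n) (hup n) (hups n))).add (hFint w hwp.1 hwp hwps)
  have hrpow_cont : ∀ r : ℝ, 0 < r → Continuous fun t : ℝ => |t| ^ r := fun r hr =>
    continuous_abs.rpow_const fun x => Or.inr hr.le
  -- main claim
  have key : Tendsto (fun n => ∫ x, |I n x|) atTop (𝓝 0) := by
    rw [Metric.tendsto_atTop]
    intro ε hε
    set Kp : ℝ := ((C0 + eLpNorm w P volume).toReal) ^ p with hKpdef
    set Kps : ℝ := ((C0 + eLpNorm w Q volume).toReal) ^ ps with hKpsdef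
    have hKp : ∀ n, ∫ x, |v n x| ^ p ≤ Kp := by
      intro n
      rw [hint_eq (v n) p hp0 (hvp n)]
      refine Real.rpow_le_rpow ENNReal.toReal_nonneg ?_ hp0.le
      refine ENNReal.toReal_mono (ENNReal.add_lt_top.mpr ⟨hC0top, hwp.2⟩).ne ?_
      calc eLpNorm (v n) P volume
          ≤ eLpNorm (u n) P volume + eLpNorm w P volume := eLpNorm_sub_le (hmeas n) hwp.1 hP1
        _ ≤ C0 + eLpNorm w P volume := add_le_add_left (hC0 n).1 _
    have hKps : ∀ n, ∫ x, |v n x| ^ ps ≤ Kps := by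
      intro n
      rw [hint_eq (v n) ps hps0 (hvps n)]
      refine Real.rpow_le_rpow ENNReal.toReal_nonneg ?_ hps0.le
      refine ENNReal.toReal_mono (ENNReal.add_lt_top.mpr ⟨hC0top, hwps.2⟩).ne ?_
      calc eLpNorm (v n) Q volume
          ≤ eLpNorm (u n) Q volume + eLpNorm w Q volume := eLpNorm_sub_le (hmeas n) hwps.1 hQ1
        _ ≤ C0 + eLpNorm w Q volume := add_le_add_left (hC0 n).2 _
    have hKp0 : 0 ≤ Kp := Real.rpow_nonneg ENNReal.toReal_nonneg _
    have hKps0 : 0 ≤ Kps := Real.rpow_nonneg ENNReal.toReal_nonneg _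
    set K : ℝ := Kp + Kps + 1 with hKdef
    have hK0 : 0 < K := by positivity
    set ε' : ℝ := ε / (2 * K) with hε'def
    have hε'0 : 0 < ε' := by positivity
    obtain ⟨Cε, hCε0, hCε⟩ := bl_pointwise hp hps1 hfcont hfgrowth hF hε'0
    set φ : ℕ → EuclideanSpace ℝ (Fin N) → ℝ :=
      fun n x => ε' * (|v n x| ^ p + |v n x| ^ ps) with hφdef
    set h : EuclideanSpace ℝ (Fin N) → ℝ :=
      fun x => Cε * (|w x| ^ p + |w x| ^ ps) + |F (w x)| with hhdef
    have hφint : ∀ n, Integrable (φ n) volume := fun n =>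
      ((hint_rpow (v n) p hp0 (hvp n)).add (hint_rpow (v n) ps hps0 (hvps n))).const_mul ε'
    have hhint : Integrable h volume :=
      (((hint_rpow w p hp0 hwp).add (hint_rpow w ps hps0 hwps)).const_mul Cε).add
        (hFint w hwp.1 hwp hwps).abs
    have hh0 : ∀ x, 0 ≤ h x := by
      intro x
      have h1 : 0 ≤ |w x| ^ p := Real.rpow_nonneg (abs_nonneg _) _
      have h2 : 0 ≤ |w x| ^ ps := Real.rpow_nonneg (abs_nonneg _) _
      have h3 : 0 ≤ |F (w x)| := abs_nonneg _
      have : 0 ≤ Cε * (|w x| ^ p + |w x| ^ ps) := by positivity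
      simp only [hhdef]
      linarith
    have hIb : ∀ n x, |I n x| ≤ φ n x + h x := by
      intro n x
      have e2 : u n x = v n x + w x := by simp [hvdef]
      have hexp : |I n x| = |F (v n x) - F (v n x + w x) + F (w x)| := by
        simp only [hIdef, hvdef]
        rw [← e2]
      rw [hexp]
      have habs : |F (v n x) - F (v n x + w x) + F (w x)| ≤
          |F (v n x + w x) - F (v n x)| + |F (w x)| := by
        refine (abs_add_le _ _).trans ?_
        rw [abs_sub_comm]
      have hptw := hCε (v n x) (w x)
      simp only [hφdef, hhdef]
      linarith
    set W : ℕ → EuclideanSpace ℝ (Fin N) → ℝ := fun n x => max (|I n x| - φ n x) 0 with hWdef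
    have hW0 : ∀ n x, 0 ≤ W n x := fun n x => le_max_right _ _
    have hWh : ∀ n x, W n x ≤ h x := by
      intro n x
      refine max_le ?_ (hh0 x)
      have := hIb n x
      linarith
    have hWmeas : ∀ n, AEStronglyMeasurable (W n) volume := by
      intro n
      have h1 : AEStronglyMeasurable (fun x => |I n x|) volume :=
        ((hIint n).1.norm).congr (Eventually.of_forall fun x => Real.norm_eq_abs _)
      have h2 : AEStronglyMeasurable (φ n) volume :=
        (((hrpow_cont p hp0).comp_aestronglyMeasurable (hvmeas n)).add
          ((hrpow_cont ps hps0).comp_aestronglyMeasurable (hvmeas n))).const_mul ε'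
      exact ((h1.sub h2).sup aestronglyMeasurable_const).congr
        (Eventually.of_forall fun x => rfl)
    have hWbound : ∀ n, ∀ᵐ x ∂(volume : Measure (EuclideanSpace ℝ (Fin N))),
        ‖W n x‖ ≤ h x := fun n =>
      Eventually.of_forall fun x => by
        rw [Real.norm_eq_abs, abs_of_nonneg (hW0 n x)]; exact hWh n x
    have hWlim : ∀ᵐ x ∂(volume : Measure (EuclideanSpace ℝ (Fin N))),
        Tendsto (fun n => W n x) atTop (𝓝 0) := by
      filter_upwards [hae] with x hx
      have hv0 : Tendsto (fun n => v n x) atTop (𝓝 0) := by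
        have := hx.sub (tendsto_const_nhds (x := w x))
        simpa using this
      have hFv : Tendsto (fun n => F (v n x)) atTop (𝓝 0) := by
        have := (hFcont.tendsto 0).comp hv0
        simpa [hF0, Function.comp_def] using this
      have hFu : Tendsto (fun n => F (u n x)) atTop (𝓝 (F (w x))) := (hFcont.tendsto _).comp hx
      have hI0 : Tendsto (fun n => |I n x|) atTop (𝓝 0) := by
        have h1 : Tendsto (fun n => I n x) atTop (𝓝 0) := by
          have := (hFv.sub hFu).add (tendsto_const_nhds (x := F (w x)))
          simpa using this
        have := h1.abs
        simpa using this
      have hφ0 : Tendsto (fun n => φ n x) atTop (𝓝 0) := by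
        have h1 : Tendsto (fun n => |v n x| ^ p) atTop (𝓝 0) := by
          have := ((hrpow_cont p hp0).tendsto 0).comp hv0
          simpa [Real.zero_rpow (ne_of_gt hp0), Function.comp_def] using this
        have h2 : Tendsto (fun n => |v n x| ^ ps) atTop (𝓝 0) := by
          have := ((hrpow_cont ps hps0).tendsto 0).comp hv0
          simpa [Real.zero_rpow (ne_of_gt hps0), Function.comp_def] using this
        have := (h1.add h2).const_mul ε'
        simpa using this
      have := (hI0.sub hφ0).max (tendsto_const_nhds (x := (0:ℝ)))
      simpa using this
    have hWtend : Tendsto (fun n => ∫ x, W n x) atTop (𝓝 0) := by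
      have := tendsto_integral_of_dominated_convergence (μ := volume)
        (f := fun _ : EuclideanSpace ℝ (Fin N) => (0:ℝ)) h hWmeas hhint hWbound hWlim
      simpa using this
    obtain ⟨n₀, hn₀⟩ := (Metric.tendsto_atTop.mp hWtend) (ε / 2) (by positivity)
    refine ⟨n₀, fun n hn => ?_⟩
    have hWn := hn₀ n hn
    rw [Real.dist_eq, sub_zero] at hWn ⊢
    have hWint_n : Integrable (W n) volume :=
      Integrable.mono' hhint (hWmeas n) (hWbound n)
    have hIabs_int : Integrable (fun x => |I n x|) volume := (hIint n).abs
    have h1 : ∫ x, |I n x| ≤ ∫ x, (W n x + φ n x) := by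
      refine integral_mono hIabs_int (hWint_n.add (hφint n)) ?_
      intro x
      show |I n x| ≤ W n x + φ n x
      have h2 := hIb n x
      have h3 : |I n x| - φ n x ≤ W n x := le_max_left _ _
      linarith
    have h2 : ∫ x, (W n x + φ n x) = (∫ x, W n x) + ∫ x, φ n x :=
      integral_add hWint_n (hφint n)
    have h3 : ∫ x, φ n x = ε' * ((∫ x, |v n x| ^ p) + ∫ x, |v n x| ^ ps) := by
      simp only [hφdef]
      rw [integral_const_mul]
      rw [integral_add (hint_rpow (v n) p hp0 (hvp n)) (hint_rpow (v n) ps hps0 (hvps n))]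
    have h4 : ∫ x, φ n x ≤ ε' * (Kp + Kps) := by
      rw [h3]
      exact mul_le_mul_of_nonneg_left (add_le_add (hKp n) (hKps n)) hε'0.le
    have h5 : ε' * (Kp + Kps) < ε / 2 := by
      have hlt : ε' * (Kp + Kps) < ε' * K := by
        refine mul_lt_mul_of_pos_left ?_ hε'0
        rw [hKdef]; linarith
      have heq : ε' * K = ε / 2 := by
        rw [hε'def]; field_simp
      linarith
    have habs_nonneg : 0 ≤ ∫ x, |I n x| := integral_nonneg fun x => abs_nonneg _
    rw [abs_of_nonneg habs_nonneg]
    have hWn' : ∫ x, W n x < ε / 2 := lt_of_le_of_lt (le_abs_self _) hWn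
    linarith
  have hnorm : ∀ n, ‖∫ x, I n x‖ ≤ ∫ x, |I n x| := fun n => by
    have := norm_integral_le_integral_norm (μ := volume) (I n)
    simpa [Real.norm_eq_abs] using this
  exact squeeze_zero_norm hnorm key
end
end

section
/- Let V : ℝ^N → ℝ be continuous with V_0 := inf V > 0, fix ε > 0, and let f satisfy (f1)–(f4). Suppose {u_n} ⊂ W^{s,p}(ℝ^N) satisfies I_ε(u_n) → c for some c ∈ ℝ and |⟨I'_ε(u_n), u_n⟩| ≤ ε_n ‖u_n‖_ε with ε_n → 0, where ⟨I'_ε(u), u⟩ = ‖u‖_ε^p − ∫_{ℝ^N} f(u)u dx. Then sup_n ‖u_n‖_ε < ∞, i.e. every Palais–Smale sequence of I_ε is bounded. -/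
open MeasureTheory Filter Topology Metric Set

noncomputable section

/-- Primitive `F(t) = ∫_0^t f(τ) dτ`. -/
noncomputable def Fprim (f : ℝ → ℝ) (t : ℝ) : ℝ := ∫ τ in (0:ℝ)..t, f τ

/-- The `p`-th power of the weighted norm `‖u‖_ε^p = [u]_{s,p}^p + ∫ V(εx)|u|^p`. -/
noncomputable def normEpsP (N : ℕ) (s p : ℝ) (V : EuclideanSpace ℝ (Fin N) → ℝ) (ε : ℝ)
    (u : EuclideanSpace ℝ (Fin N) → ℝ) : ℝ :=
  gagliardoP N s p u + ∫ x, V (ε • x) * |u x| ^ p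

/-- Membership in the weighted space `W_ε`. -/
def MemWeps (N : ℕ) (s p : ℝ) (V : EuclideanSpace ℝ (Fin N) → ℝ) (ε : ℝ)
    (u : EuclideanSpace ℝ (Fin N) → ℝ) : Prop :=
  MemLp u (ENNReal.ofReal p) volume ∧ GagliardoFinite N s p u ∧
    Integrable (fun x => V (ε • x) * |u x| ^ p) volume

/-- The energy functional `I_ε(u) = (1/p)‖u‖_ε^p - ∫ F(u)`. -/
noncomputable def Ieps (N : ℕ) (s p : ℝ) (V : EuclideanSpace ℝ (Fin N) → ℝ) (ε : ℝ)
    (f : ℝ → ℝ) (u : EuclideanSpace ℝ (Fin N) → ℝ) : ℝ :=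
  (1 / p) * normEpsP N s p V ε u - ∫ x, Fprim f (u x)


lemma aux_poly_bound (p δ a b : ℝ) (hp : 1 < p) (hδ : 0 < δ) (ha : 0 ≤ a) (hb : 0 ≤ b) :
    ∃ C : ℝ, ∀ t : ℝ, 0 ≤ t → δ * t ^ p ≤ a + b * t → t ≤ C := by
  refine ⟨max 1 (((a + b) / δ) ^ (1 / (p - 1))), fun t ht hineq => ?_⟩
  by_contra h
  push_neg at h
  have h1 : 1 < t := lt_of_le_of_lt (le_max_left _ _) h
  have hR : ((a + b) / δ) ^ (1 / (p - 1)) < t := lt_of_le_of_lt (le_max_right _ _) h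
  have hab : 0 ≤ (a + b) / δ := div_nonneg (by linarith) hδ.le
  have hp1 : 0 < p - 1 := by linarith
  have ht0 : 0 < t := by linarith
  have h2 : (a + b) / δ < t ^ (p - 1) := by
    have := Real.rpow_lt_rpow (Real.rpow_nonneg hab _) hR hp1
    rwa [← Real.rpow_mul hab, one_div, inv_mul_cancel₀ hp1.ne', Real.rpow_one] at this
  have h3 : t ^ p = t ^ (p - 1) * t := by
    rw [Real.rpow_sub ht0, Real.rpow_one, div_mul_cancel₀ _ ht0.ne']
  have h4 : a + b < δ * t ^ (p - 1) := by
    rw [div_lt_iff₀ hδ] at h2; linarith [h2]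
  have h5 : (a + b) * t < δ * t ^ (p - 1) * t := by
    exact mul_lt_mul_of_pos_right h4 ht0
  nlinarith [mul_nonneg ha (sub_nonneg.mpr h1.le)]


/-- Palais–Smale sequences are bounded: if `I_ε(u_n) → c` and
`|⟨I'_ε(u_n), u_n⟩| ≤ ε_n ‖u_n‖_ε` with `ε_n → 0`, where
`⟨I'_ε(u), u⟩ = ‖u‖_ε^p - ∫ f(u)u`, then `sup_n ‖u_n‖_ε < ∞`. -/
theorem statement_11
    (N : ℕ) (s p ps : ℝ) (hs : s ∈ Ioo (0:ℝ) 1) (hp : 1 < p) (hN : s * p < N)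
    (hps : ps = N * p / (N - s * p))
    (V : EuclideanSpace ℝ (Fin N) → ℝ) (hVcont : Continuous V)
    (hV0 : 0 < ⨅ x, V x)
    (ε : ℝ) (hε : 0 < ε)
    (f : ℝ → ℝ)
    (hf1 : Continuous f) (hf1' : ∀ t ≤ (0:ℝ), f t = 0)
    (hf2 : Tendsto (fun t => f t / |t| ^ (p - 1)) (𝓝[≠] (0:ℝ)) (𝓝 0))
    (q : ℝ) (hq : p < q) (hq' : q < ps)
    (hf3 : Tendsto (fun t => f t / |t| ^ (q - 1)) (cocompact ℝ) (𝓝 0))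
    (θ : ℝ) (hθp : p < θ)
    (hf4 : ∀ t : ℝ, 0 < t → 0 < θ * Fprim f t ∧ θ * Fprim f t ≤ t * f t)
    (u : ℕ → EuclideanSpace ℝ (Fin N) → ℝ)
    (hu : ∀ n, MemWeps N s p V ε (u n))
    (huint : ∀ n, Integrable (fun x => f (u n x) * u n x) volume)
    (c : ℝ)
    (hIc : Tendsto (fun n => Ieps N s p V ε f (u n)) atTop (𝓝 c))
    (εseq : ℕ → ℝ)
    (hεseq : Tendsto εseq atTop (𝓝 0))
    (hPS : ∀ n,
      |normEpsP N s p V ε (u n) - ∫ x, f (u n x) * u n x| ≤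
        εseq n * (normEpsP N s p V ε (u n)) ^ (1 / p)) :
    ∃ C : ℝ, ∀ n, (normEpsP N s p V ε (u n)) ^ (1 / p) ≤ C := by
  classical
  -- positivity of V
  have hbdd : BddBelow (range V) := by
    by_contra hb
    rw [Real.iInf_of_not_bddBelow hb] at hV0
    exact lt_irrefl 0 hV0
  have hVpos : ∀ x, 0 < V x := fun x => lt_of_lt_of_le hV0 (ciInf_le hbdd x)
  have hp0 : (0:ℝ) < p := by linarith
  have hθ0 : (0:ℝ) < θ := by linarith
  -- nonnegativity of the norm
  have hMnn : ∀ n, 0 ≤ normEpsP N s p V ε (u n) := by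
    intro n
    have h1 : 0 ≤ gagliardoP N s p (u n) := by
      apply integral_nonneg
      intro z
      apply div_nonneg (Real.rpow_nonneg (abs_nonneg _) _) (Real.rpow_nonneg dist_nonneg _)
    have h2 : 0 ≤ ∫ x, V (ε • x) * |u n x| ^ p := by
      apply integral_nonneg
      intro x
      exact mul_nonneg (hVpos _).le (Real.rpow_nonneg (abs_nonneg _) _)
    unfold normEpsP
    linarith
  -- properties of F
  have hF0 : ∀ t : ℝ, t ≤ 0 → Fprim f t = 0 := by
    intro t ht
    unfold Fprim
    rw [intervalIntegral.integral_congr (g := fun _ => (0:ℝ))]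
    · simp
    · intro τ hτ
      rw [Set.uIcc_of_ge ht] at hτ
      exact hf1' τ hτ.2
  have hFnn : ∀ t : ℝ, 0 ≤ Fprim f t := by
    intro t
    rcases le_or_gt t 0 with ht | ht
    · rw [hF0 t ht]
    · have := (hf4 t ht).1
      nlinarith
  have hFle : ∀ t : ℝ, θ * Fprim f t ≤ t * f t := by
    intro t
    rcases le_or_gt t 0 with ht | ht
    · rw [hF0 t ht, hf1' t ht]; simp
    · exact (hf4 t ht).2
  -- integrability of F ∘ u n and the comparison integral
  have hfuu_nn : ∀ n x, 0 ≤ f (u n x) * u n x := by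
    intro n x
    have := hFle (u n x)
    have := hFnn (u n x)
    nlinarith
  have hFmeas : Continuous (Fprim f) := by
    unfold Fprim
    exact intervalIntegral.continuous_primitive
      (fun a b => hf1.intervalIntegrable a b) 0
  have hFint : ∀ n, Integrable (fun x => Fprim f (u n x)) volume := by
    intro n
    apply Integrable.mono' (((huint n).const_mul (1/θ)))
      (hFmeas.comp_aestronglyMeasurable (hu n).1.1)
    filter_upwards with x
    rw [Real.norm_eq_abs, abs_of_nonneg (hFnn _)]
    have := hFle (u n x)
    rw [div_mul_eq_mul_div, one_mul, le_div_iff₀ hθ0]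
    linarith
  have hFintle : ∀ n, ∫ x, Fprim f (u n x) ≤ (1/θ) * ∫ x, f (u n x) * u n x := by
    intro n
    rw [← integral_const_mul]
    apply integral_mono (hFint n) ((huint n).const_mul (1/θ))
    intro x
    have := hFle (u n x)
    show Fprim f (u n x) ≤ 1/θ * (f (u n x) * u n x)
    rw [div_mul_eq_mul_div, one_mul, le_div_iff₀ hθ0]
    linarith
  -- bounds on I and εseq
  obtain ⟨C1, hC1⟩ : ∃ C1, ∀ n, Ieps N s p V ε f (u n) ≤ C1 := by
    obtain ⟨C1, hC1⟩ := hIc.bddAbove_range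
    exact ⟨C1, fun n => hC1 ⟨n, rfl⟩⟩
  obtain ⟨E, hE⟩ : ∃ E, ∀ n, |εseq n| ≤ E := by
    obtain ⟨E, hE⟩ := (hεseq.abs.congr' (by filter_upwards with n using rfl)).bddAbove_range
    exact ⟨E, fun n => hE ⟨n, rfl⟩⟩
  have hE0 : 0 ≤ E := le_trans (abs_nonneg _) (hE 0)
  -- set up the polynomial bound
  have hδ : (0:ℝ) < 1/p - 1/θ := by
    rw [sub_pos]
    exact one_div_lt_one_div_of_lt hp0 hθp
  obtain ⟨C, hC⟩ := aux_poly_bound p (1/p - 1/θ) (max C1 0) (E/θ) hp hδ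
    (le_max_right _ _) (div_nonneg hE0 hθ0.le)
  refine ⟨C, fun n => ?_⟩
  set M := normEpsP N s p V ε (u n) with hM
  set t := M ^ (1/p) with htdef
  have ht0 : 0 ≤ t := Real.rpow_nonneg (hMnn n) _
  have htp : t ^ p = M := by
    rw [htdef, ← Real.rpow_mul (hMnn n), one_div, inv_mul_cancel₀ hp0.ne', Real.rpow_one]
  apply hC t ht0
  have hPSn := hPS n
  have hεb : εseq n * t ≤ E * t :=
    mul_le_mul_of_nonneg_right (le_trans (le_abs_self _) (hE n)) ht0
  have hintle : ∫ x, f (u n x) * u n x ≤ M + E * t := by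
    have := abs_le.mp hPSn
    linarith [this.1]
  have hIn := hC1 n
  have hIeq : Ieps N s p V ε f (u n) = (1/p) * M - ∫ x, Fprim f (u n x) := rfl
  have h1 : (1/p) * M ≤ C1 + (1/θ) * ∫ x, f (u n x) * u n x := by
    have := hFintle n
    linarith
  have h2 : (1/θ) * (∫ x, f (u n x) * u n x) ≤ (1/θ) * (M + E * t) := by
    apply mul_le_mul_of_nonneg_left hintle (by positivity)
  rw [htp]
  have : C1 ≤ max C1 0 := le_max_left _ _
  have hEθ : (1/θ) * (E * t) = E/θ * t := by ring
  nlinarith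
end
end

section
/- Let V : ℝ^N → ℝ be continuous with V_0 := inf V > 0, fix ε > 0, and let f satisfy (f1)–(f3). Let {u_n} ⊂ W^{s,p}(ℝ^N) satisfy sup_n ‖u_n‖_ε < ∞ and ‖u_n‖_ε^p = ∫_{ℝ^N} f(u_n)u_n dx for every n. If for every R > 0 one has lim_{n→∞} sup_{y∈ℝ^N} ∫_{B_R(y)} |u_n|^p dx = 0, then ‖u_n‖_ε → 0. -/
open MeasureTheory Filter Topology Metric Set

noncomputable section

open scoped ENNReal NNReal

namespace St12

abbrev EN (N : ℕ) := EuclideanSpace ℝ (Fin N)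

def cB (N : ℕ) : ℝ≥0∞ := volume (ball (0 : EN N) 1)

def muB (N : ℕ) (t : ℝ) : ℝ≥0∞ := cB N * ENNReal.ofReal (t ^ (N : ℝ))

def Dfun (N : ℕ) (g : EN N → ℝ) (t : ℝ) (x : EN N) : ℝ≥0∞ :=
  (muB N t)⁻¹ * ∫⁻ y in ball x t, ENNReal.ofReal |g x - g y|

def AVfun (N : ℕ) (g : EN N → ℝ) (t : ℝ) (x : EN N) : ℝ≥0∞ :=
  (muB N t)⁻¹ * ∫⁻ y in ball x t, ENNReal.ofReal |g y|

def Tfun (N : ℕ) (g : EN N → ℝ) (r : ℝ) : ℝ≥0∞ := ∫⁻ x, ENNReal.ofReal |g x| ^ r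

def Glfun (N : ℕ) (s p : ℝ) (g : EN N → ℝ) : ℝ≥0∞ :=
  ∫⁻ z : EN N × EN N, ENNReal.ofReal (|g z.1 - g z.2| ^ p / dist z.1 z.2 ^ ((N : ℝ) + s * p))

variable {N : ℕ} {s p : ℝ}

lemma ENnontrivial (hN : 0 < N) : Nontrivial (EN N) := by
  refine ⟨0, EuclideanSpace.single ⟨0, hN⟩ 1, fun h => ?_⟩
  have := congrArg (fun v : EN N => v ⟨0, hN⟩) h.symm
  simp [EuclideanSpace.single_apply] at this

lemma cB_pos (hN : 0 < N) : 0 < cB N := measure_ball_pos _ _ one_pos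

lemma cB_lt_top : cB N < ∞ := measure_ball_lt_top

lemma volume_ball_eq (hN : 0 < N) {t : ℝ} (ht : 0 < t) (x : EN N) :
    volume (ball x t) = muB N t := by
  haveI := ENnontrivial hN
  rw [Measure.addHaar_ball volume x ht.le, muB, mul_comm]
  congr 2
  rw [finrank_euclideanSpace_fin, ← Real.rpow_natCast]

lemma muB_ne_zero (hN : 0 < N) {t : ℝ} (ht : 0 < t) : muB N t ≠ 0 := by
  refine mul_ne_zero (cB_pos hN).ne' ?_
  exact (ENNReal.ofReal_pos.mpr (by positivity)).ne'

lemma muB_ne_top {t : ℝ} : muB N t ≠ ∞ :=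
  ENNReal.mul_ne_top cB_lt_top.ne ENNReal.ofReal_ne_top


lemma measurable_inner_lint {F : EN N × EN N → ℝ≥0∞} (hF : Measurable F) (t : ℝ) :
    Measurable (fun x : EN N => ∫⁻ y in ball x t, F (x, y)) := by
  have hG : Measurable (fun z : EN N × EN N => if dist z.2 z.1 < t then F z else 0) := by
    apply Measurable.ite _ hF measurable_const
    exact measurableSet_lt (measurable_dist.comp (measurable_snd.prodMk measurable_fst))
      measurable_const
  have : (fun x : EN N => ∫⁻ y in ball x t, F (x, y))
      = fun x : EN N => ∫⁻ y, if dist y x < t then F (x, y) else 0 := by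
    funext x
    rw [← lintegral_indicator measurableSet_ball (fun y => F (x, y))]
    refine lintegral_congr fun y => ?_
    by_cases h : y ∈ ball x t
    · simp [Set.indicator_of_mem h, mem_ball.mp h]
    · rw [Set.indicator_of_notMem h, if_neg (fun hh => h (mem_ball.mpr hh))]
  rw [this]
  exact Measurable.lintegral_prod_right'
    (f := fun z : EN N × EN N => if dist z.2 z.1 < t then F z else 0) hG

lemma measurable_ofReal_abs_sub {g : EN N → ℝ} (hg : Measurable g) :
    Measurable (fun z : EN N × EN N => ENNReal.ofReal |g z.1 - g z.2|) :=
  ENNReal.measurable_ofReal.comp ((hg.comp measurable_fst).sub (hg.comp measurable_snd)).abs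

lemma measurable_Dfun {g : EN N → ℝ} (hg : Measurable g) (t : ℝ) :
    Measurable (Dfun N g t) :=
  (measurable_inner_lint (measurable_ofReal_abs_sub hg) t).const_mul _

lemma measurable_AVfun {g : EN N → ℝ} (hg : Measurable g) (t : ℝ) :
    Measurable (AVfun N g t) :=
  (measurable_inner_lint
    (F := fun z : EN N × EN N => ENNReal.ofReal |g z.2|)
    (ENNReal.measurable_ofReal.comp (hg.comp measurable_snd).abs) t).const_mul _

lemma W_le_D_add_AV (hN : 0 < N) {g : EN N → ℝ} (hg : Measurable g) {t : ℝ} (ht : 0 < t)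
    (x : EN N) :
    ENNReal.ofReal |g x| ≤ Dfun N g t x + AVfun N g t x := by
  have h0 := muB_ne_zero hN ht
  have hT := @muB_ne_top N t
  have key : muB N t * ENNReal.ofReal |g x|
      ≤ (∫⁻ y in ball x t, ENNReal.ofReal |g x - g y|)
        + ∫⁻ y in ball x t, ENNReal.ofReal |g y| := by
    have h1 : muB N t * ENNReal.ofReal |g x|
        = ∫⁻ _ in ball x t, ENNReal.ofReal |g x| := by
      rw [setLIntegral_const, volume_ball_eq hN ht, mul_comm]
    rw [h1]
    have hm : Measurable fun y => ENNReal.ofReal |g x - g y| :=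
      ENNReal.measurable_ofReal.comp (measurable_const.sub hg).abs
    calc ∫⁻ _ in ball x t, ENNReal.ofReal |g x|
        ≤ ∫⁻ y in ball x t, (ENNReal.ofReal |g x - g y| + ENNReal.ofReal |g y|) := by
          apply lintegral_mono; intro y; dsimp only
          rw [← ENNReal.ofReal_add (abs_nonneg _) (abs_nonneg _)]
          exact ENNReal.ofReal_le_ofReal (by simpa using abs_add_le (g x - g y) (g y))
      _ = _ := lintegral_add_left' hm.aemeasurable _
  calc ENNReal.ofReal |g x| = (muB N t)⁻¹ * (muB N t * ENNReal.ofReal |g x|) := by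
        rw [← mul_assoc, ENNReal.inv_mul_cancel h0 hT, one_mul]
    _ ≤ (muB N t)⁻¹ * ((∫⁻ y in ball x t, ENNReal.ofReal |g x - g y|)
          + ∫⁻ y in ball x t, ENNReal.ofReal |g y|) := mul_le_mul_right key _
    _ = Dfun N g t x + AVfun N g t x := by rw [mul_add]; rfl

lemma one_div_conj (hp : 1 < p) : 1 / Real.conjExponent p = 1 - 1/p := by
  unfold Real.conjExponent
  have h0 : p ≠ 0 := by linarith
  have h1 : p - 1 ≠ 0 := by intro h; apply h0; linarith [sub_eq_zero.mp h]
  field_simp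

lemma holder_ball (hN : 0 < N) (hp : 1 < p) {t : ℝ} (ht : 0 < t) (x : EN N)
    {F : EN N → ℝ≥0∞} (hF : AEMeasurable F (volume.restrict (ball x t))) :
    ∫⁻ y in ball x t, F y
      ≤ (∫⁻ y in ball x t, F y ^ p) ^ (1/p) * muB N t ^ (1 - 1/p) := by
  have hpq := Real.HolderConjugate.conjExponent hp
  have H := ENNReal.lintegral_mul_le_Lp_mul_Lq (volume.restrict (ball x t)) hpq hF
    (aemeasurable_const (b := (1:ℝ≥0∞)))
  simp only [Pi.mul_apply, mul_one, ENNReal.one_rpow, lintegral_one,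
    Measure.restrict_apply_univ] at H
  refine H.trans (le_of_eq ?_)
  rw [one_div_conj hp, volume_ball_eq hN ht]

lemma Dp_le (hN : 0 < N) (hp : 1 < p) {g : EN N → ℝ} (hg : Measurable g) {t : ℝ}
    (ht : 0 < t) (x : EN N) :
    Dfun N g t x ^ p ≤ (muB N t)⁻¹ * ∫⁻ y in ball x t, ENNReal.ofReal |g x - g y| ^ p := by
  have h0 := muB_ne_zero hN ht
  have hT := @muB_ne_top N t
  have hp0 : (0:ℝ) < p := by linarith
  set J := ∫⁻ y in ball x t, ENNReal.ofReal |g x - g y| ^ p with hJ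
  have h1 : Dfun N g t x ≤ J ^ (1/p) * (muB N t) ^ (-(1/p)) := by
    have := holder_ball hN hp ht x
      (F := fun y => ENNReal.ofReal |g x - g y|)
      ((ENNReal.measurable_ofReal.comp (measurable_const.sub hg).abs).aemeasurable)
    calc Dfun N g t x ≤ (muB N t)⁻¹ * (J ^ (1/p) * muB N t ^ (1 - 1/p)) :=
          mul_le_mul_right this _
      _ = J ^ (1/p) * ((muB N t) ^ (-1:ℝ) * muB N t ^ (1 - 1/p)) := by
          rw [ENNReal.rpow_neg_one]; ring
      _ = J ^ (1/p) * (muB N t) ^ (-(1/p)) := by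
          rw [← ENNReal.rpow_add _ _ h0 hT]; congr 1; ring
  calc Dfun N g t x ^ p ≤ (J ^ (1/p) * (muB N t) ^ (-(1/p))) ^ p :=
        ENNReal.rpow_le_rpow h1 hp0.le
    _ = (muB N t)⁻¹ * J := by
        rw [ENNReal.mul_rpow_of_nonneg _ _ hp0.le, ← ENNReal.rpow_mul, ← ENNReal.rpow_mul,
          one_div_mul_cancel hp0.ne', neg_mul, one_div_mul_cancel hp0.ne',
          ENNReal.rpow_one, ENNReal.rpow_neg_one, mul_comm]

lemma kernel_ineq (hN : 0 < N) (hs0 : 0 < s) (hp0 : 0 < p) {t : ℝ} (ht : 0 < t)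
    {x y : EN N} (hxy : y ∈ ball x t) :
    (muB N t)⁻¹ ≤ (cB N)⁻¹ * ENNReal.ofReal (t ^ (s*p))
      * (ENNReal.ofReal (dist x y ^ ((N:ℝ) + s * p)))⁻¹ := by
  have hcb0 := (cB_pos hN).ne'
  have hcbT := (@cB_lt_top N).ne
  have htsp0 : ENNReal.ofReal (t ^ (s*p)) ≠ 0 :=
    (ENNReal.ofReal_pos.mpr (Real.rpow_pos_of_pos ht _)).ne'
  have htspT : ENNReal.ofReal (t ^ (s*p)) ≠ ∞ := ENNReal.ofReal_ne_top
  rw [muB, ENNReal.mul_inv (Or.inl hcb0) (Or.inl hcbT), mul_assoc]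
  apply mul_le_mul_right
  have h1 : ENNReal.ofReal (dist x y ^ ((N:ℝ) + s * p))
      ≤ ENNReal.ofReal (t ^ (N:ℝ)) * ENNReal.ofReal (t ^ (s*p)) := by
    rw [← ENNReal.ofReal_mul (by positivity), ← Real.rpow_add ht]
    apply ENNReal.ofReal_le_ofReal
    exact Real.rpow_le_rpow dist_nonneg (le_of_lt (mem_ball'.mp hxy)) (by positivity)
  calc (ENNReal.ofReal (t ^ (N:ℝ)))⁻¹
      = ENNReal.ofReal (t ^ (s*p)) *
        ((ENNReal.ofReal (t ^ (N:ℝ)) * ENNReal.ofReal (t ^ (s*p)))⁻¹) := by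
        rw [ENNReal.mul_inv (Or.inr htspT) (Or.inr htsp0), ← mul_assoc, mul_comm
          (ENNReal.ofReal (t ^ (s*p))), mul_assoc, ENNReal.mul_inv_cancel htsp0 htspT, mul_one]
    _ ≤ ENNReal.ofReal (t ^ (s*p)) * (ENNReal.ofReal (dist x y ^ ((N:ℝ) + s * p)))⁻¹ :=
        mul_le_mul_right (ENNReal.inv_le_inv.mpr h1) _

lemma glfun_integrand_eq {g : EN N → ℝ} (hs0 : 0 < s) (hp0 : 0 < p) (hN : 0 < N)
    (z : EN N × EN N) :
    ENNReal.ofReal (|g z.1 - g z.2| ^ p / dist z.1 z.2 ^ ((N : ℝ) + s * p))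
      = ENNReal.ofReal |g z.1 - g z.2| ^ p
        * (ENNReal.ofReal (dist z.1 z.2 ^ ((N : ℝ) + s * p)))⁻¹ := by
  rcases eq_or_ne z.1 z.2 with h | h
  · have hd : dist z.1 z.2 = 0 := by simp [h]
    have hgg : g z.1 - g z.2 = 0 := by rw [h]; ring
    rw [hd, hgg, Real.zero_rpow (by positivity), abs_zero, Real.zero_rpow hp0.ne']
    simp [ENNReal.zero_rpow_of_pos hp0]
  · have hd : 0 < dist z.1 z.2 := dist_pos.mpr h
    rw [ENNReal.ofReal_div_of_pos (Real.rpow_pos_of_pos hd _), div_eq_mul_inv,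
      ENNReal.ofReal_rpow_of_nonneg (abs_nonneg _) hp0.le]

lemma intD (hN : 0 < N) (hp : 1 < p) (hs0 : 0 < s) {g : EN N → ℝ} (hg : Measurable g)
    {t : ℝ} (ht : 0 < t) :
    ∫⁻ x, Dfun N g t x ^ p
      ≤ (cB N)⁻¹ * ENNReal.ofReal (t ^ (s*p)) * Glfun N s p g := by
  have hp0 : (0:ℝ) < p := by linarith
  have step1 : ∫⁻ x, Dfun N g t x ^ p
      ≤ ∫⁻ x, ∫⁻ y, (if dist y x < t then
          (cB N)⁻¹ * ENNReal.ofReal (t ^ (s*p)) *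
            (ENNReal.ofReal |g x - g y| ^ p
              * (ENNReal.ofReal (dist x y ^ ((N:ℝ) + s * p)))⁻¹) else 0) := by
    apply lintegral_mono
    intro x
    refine (Dp_le hN hp hg ht x).trans ?_
    rw [← lintegral_const_mul' _ _ (ENNReal.inv_ne_top.mpr (muB_ne_zero hN ht))]
    rw [← lintegral_indicator measurableSet_ball
      (fun y => (muB N t)⁻¹ * ENNReal.ofReal |g x - g y| ^ p)]
    apply lintegral_mono
    intro y
    by_cases hy : y ∈ ball x t
    · rw [Set.indicator_of_mem hy]
      dsimp only
      rw [if_pos (mem_ball.mp hy)]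
      exact le_trans (mul_le_mul' (kernel_ineq hN hs0 hp0 ht hy) le_rfl) (le_of_eq (by ring))
    · rw [Set.indicator_of_notMem hy]
      dsimp only
      rw [if_neg (fun hh => hy (mem_ball.mpr hh))]
  have step2 : (∫⁻ x, ∫⁻ y, (if dist y x < t then
          (cB N)⁻¹ * ENNReal.ofReal (t ^ (s*p)) *
            (ENNReal.ofReal |g x - g y| ^ p
              * (ENNReal.ofReal (dist x y ^ ((N:ℝ) + s * p)))⁻¹) else 0))
      ≤ (cB N)⁻¹ * ENNReal.ofReal (t ^ (s*p)) * Glfun N s p g := by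
    have hGle : ∀ x y : EN N, (if dist y x < t then
          (cB N)⁻¹ * ENNReal.ofReal (t ^ (s*p)) *
            (ENNReal.ofReal |g x - g y| ^ p
              * (ENNReal.ofReal (dist x y ^ ((N:ℝ) + s * p)))⁻¹) else 0)
        ≤ (cB N)⁻¹ * ENNReal.ofReal (t ^ (s*p)) *
            (ENNReal.ofReal |g x - g y| ^ p
              * (ENNReal.ofReal (dist x y ^ ((N:ℝ) + s * p)))⁻¹) := by
      intro x y
      split_ifs with h
      · exact le_rfl
      · exact zero_le
    calc (∫⁻ x, ∫⁻ y, _) ≤ ∫⁻ x, ∫⁻ y, (cB N)⁻¹ * ENNReal.ofReal (t ^ (s*p)) *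
            (ENNReal.ofReal |g x - g y| ^ p
              * (ENNReal.ofReal (dist x y ^ ((N:ℝ) + s * p)))⁻¹) :=
          lintegral_mono fun x => lintegral_mono fun y => hGle x y
      _ = (cB N)⁻¹ * ENNReal.ofReal (t ^ (s*p)) * Glfun N s p g := by
          have hconst : (cB N)⁻¹ * ENNReal.ofReal (t ^ (s*p)) ≠ ∞ := by
            apply ENNReal.mul_ne_top _ ENNReal.ofReal_ne_top
            simp [ENNReal.inv_ne_top, (cB_pos hN).ne']
          have hmeas : Measurable (fun z : EN N × EN N =>
              ENNReal.ofReal |g z.1 - g z.2| ^ p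
                * (ENNReal.ofReal (dist z.1 z.2 ^ ((N:ℝ) + s * p)))⁻¹) := by
            apply Measurable.mul
            · exact (measurable_ofReal_abs_sub hg).pow_const p
            · exact (ENNReal.measurable_ofReal.comp
                ((measurable_dist.pow_const _))).inv
          simp_rw [lintegral_const_mul' _ _ hconst]
          congr 1
          rw [Glfun, lintegral_congr (glfun_integrand_eq hs0 hp0 hN),
            show (volume : Measure (EN N × EN N)) = (volume.prod volume) from rfl,
            lintegral_prod _ hmeas.aemeasurable]
  exact step1.trans step2

lemma AV_le_r (hN : 0 < N) {t : ℝ} (ht : 0 < t) {r : ℝ} (hr : 1 < r) {g : EN N → ℝ}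
    (hg : Measurable g) (x : EN N) :
    AVfun N g t x
      ≤ (∫⁻ y in ball x t, ENNReal.ofReal |g y| ^ r) ^ (1/r) * (muB N t) ^ (-(1/r)) := by
  have h0 := muB_ne_zero hN ht
  have hT := @muB_ne_top N t
  have H := holder_ball hN hr ht x (F := fun y => ENNReal.ofReal |g y|)
    (ENNReal.measurable_ofReal.comp hg.abs).aemeasurable
  calc AVfun N g t x ≤ (muB N t)⁻¹
        * ((∫⁻ y in ball x t, ENNReal.ofReal |g y| ^ r) ^ (1/r) * muB N t ^ (1 - 1/r)) :=
        mul_le_mul_right H _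
    _ = (∫⁻ y in ball x t, ENNReal.ofReal |g y| ^ r) ^ (1/r)
        * ((muB N t) ^ (-1:ℝ) * muB N t ^ (1 - 1/r)) := by
        rw [ENNReal.rpow_neg_one]; ring
    _ = (∫⁻ y in ball x t, ENNReal.ofReal |g y| ^ r) ^ (1/r) * (muB N t) ^ (-(1/r)) := by
        rw [← ENNReal.rpow_add _ _ h0 hT]; congr 2; ring

lemma AV_le_global (hN : 0 < N) {t : ℝ} (ht : 0 < t) {r : ℝ} (hr : 1 < r) {g : EN N → ℝ}
    (hg : Measurable g) (x : EN N) :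
    AVfun N g t x ≤ (Tfun N g r) ^ (1/r) * (muB N t) ^ (-(1/r)) := by
  refine (AV_le_r hN ht hr hg x).trans ?_
  apply mul_le_mul_left
  apply ENNReal.rpow_le_rpow _ (by positivity)
  exact setLIntegral_le_lintegral _ _

lemma level (hN : 0 < N) (hp : 1 < p) (hs0 : 0 < s) {g : EN N → ℝ} (hg : Measurable g)
    {t : ℝ} (ht : 0 < t) {lam : ℝ≥0∞} (hlam0 : lam ≠ 0) (hlamT : lam ≠ ∞)
    (hAV : ∀ x, AVfun N g t x < lam) :
    volume {x | 2*lam ≤ ENNReal.ofReal |g x|}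
      ≤ (lam ^ p)⁻¹ * ((cB N)⁻¹ * ENNReal.ofReal (t ^ (s*p)) * Glfun N s p g) := by
  have hp0 : (0:ℝ) < p := by linarith
  have hlp0 : lam ^ p ≠ 0 := (ENNReal.rpow_pos (hlam0.bot_lt) hlamT).ne'
  have hlpT : lam ^ p ≠ ∞ := (ENNReal.rpow_lt_top_of_nonneg hp0.le hlamT).ne
  have hsub : {x : EN N | 2*lam ≤ ENNReal.ofReal |g x|}
      ⊆ {x : EN N | lam ^ p ≤ Dfun N g t x ^ p} := by
    intro x hx
    simp only [Set.mem_setOf_eq] at hx ⊢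
    have h1 : lam ≤ Dfun N g t x := by
      by_contra h
      push_neg at h
      have h2 : Dfun N g t x + AVfun N g t x < 2 * lam := by
        rw [two_mul]
        exact ENNReal.add_lt_add h (hAV x)
      exact absurd (hx.trans (W_le_D_add_AV hN hg ht x)) (not_le.mpr h2)
    exact ENNReal.rpow_le_rpow h1 hp0.le
  have cheb := mul_meas_ge_le_lintegral₀
    (((measurable_Dfun hg t).pow_const p).aemeasurable (μ := volume)) (lam ^ p)
  calc volume {x : EN N | 2*lam ≤ ENNReal.ofReal |g x|}
      ≤ volume {x : EN N | lam ^ p ≤ Dfun N g t x ^ p} := measure_mono hsub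
    _ = (lam ^ p)⁻¹ * (lam ^ p * volume {x : EN N | lam ^ p ≤ Dfun N g t x ^ p}) := by
        rw [← mul_assoc, ENNReal.inv_mul_cancel hlp0 hlpT, one_mul]
    _ ≤ (lam ^ p)⁻¹ * (∫⁻ x, Dfun N g t x ^ p) := mul_le_mul_right cheb _
    _ ≤ (lam ^ p)⁻¹ * ((cB N)⁻¹ * ENNReal.ofReal (t ^ (s*p)) * Glfun N s p g) :=
        mul_le_mul_right (intD hN hp hs0 hg ht) _

lemma level_real (hN : 0 < N) (hp : 1 < p) (hs0 : 0 < s) {g : EN N → ℝ} (hg : Measurable g)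
    {t : ℝ} (ht : 0 < t) {lam : ℝ} (hlam : 0 < lam)
    (hAV : ∀ x, AVfun N g t x < ENNReal.ofReal (lam/2)) :
    volume {x : EN N | lam < |g x|}
      ≤ (ENNReal.ofReal (lam/2) ^ p)⁻¹
        * ((cB N)⁻¹ * ENNReal.ofReal (t ^ (s*p)) * Glfun N s p g) := by
  have hsub : {x : EN N | lam < |g x|}
      ⊆ {x : EN N | 2 * ENNReal.ofReal (lam/2) ≤ ENNReal.ofReal |g x|} := by
    intro x hx
    simp only [Set.mem_setOf_eq] at hx ⊢
    have : (2 : ℝ≥0∞) * ENNReal.ofReal (lam/2) = ENNReal.ofReal lam := by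
      rw [show (2:ℝ≥0∞) = ENNReal.ofReal 2 by simp, ← ENNReal.ofReal_mul (by norm_num)]
      norm_num [mul_div_cancel₀]
    rw [this]
    exact ENNReal.ofReal_le_ofReal hx.le
  exact (measure_mono hsub).trans
    (level hN hp hs0 hg ht (ENNReal.ofReal_pos.mpr (by linarith)).ne'
      ENNReal.ofReal_ne_top hAV)

lemma cheb_simple (hp0 : 0 < p) {g : EN N → ℝ} (hg : Measurable g) {A : ℝ≥0∞}
    (hT : Tfun N g p ≤ A) {lam : ℝ} (hlam : 0 < lam) :
    volume {x : EN N | lam < |g x|} ≤ A * ENNReal.ofReal (lam ^ (-p)) := by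
  have h0 : ENNReal.ofReal lam ^ p ≠ 0 :=
    (ENNReal.rpow_pos (ENNReal.ofReal_pos.mpr hlam) ENNReal.ofReal_ne_top).ne'
  have hTp : ENNReal.ofReal lam ^ p ≠ ∞ :=
    (ENNReal.rpow_lt_top_of_nonneg hp0.le ENNReal.ofReal_ne_top).ne
  have hsub : {x : EN N | lam < |g x|}
      ⊆ {x : EN N | ENNReal.ofReal lam ^ p ≤ ENNReal.ofReal |g x| ^ p} := fun x hx => by
    simp only [Set.mem_setOf_eq] at hx ⊢
    exact ENNReal.rpow_le_rpow (ENNReal.ofReal_le_ofReal hx.le) hp0.le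
  have cheb := mul_meas_ge_le_lintegral₀
    (f := fun x : EN N => ENNReal.ofReal |g x| ^ p)
    (((ENNReal.measurable_ofReal.comp hg.abs).pow_const p).aemeasurable (μ := volume))
    (ENNReal.ofReal lam ^ p)
  calc volume {x : EN N | lam < |g x|}
      ≤ volume {x : EN N | ENNReal.ofReal lam ^ p ≤ ENNReal.ofReal |g x| ^ p} :=
        measure_mono hsub
    _ = (ENNReal.ofReal lam ^ p)⁻¹ * (ENNReal.ofReal lam ^ p * _) := by
        rw [← mul_assoc, ENNReal.inv_mul_cancel h0 hTp, one_mul]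
    _ ≤ (ENNReal.ofReal lam ^ p)⁻¹ * Tfun N g p := mul_le_mul_right cheb _
    _ ≤ (ENNReal.ofReal lam ^ p)⁻¹ * A := mul_le_mul_right hT _
    _ = A * ENNReal.ofReal (lam ^ (-p)) := by
        rw [mul_comm]
        congr 1
        rw [ENNReal.ofReal_rpow_of_pos hlam, Real.rpow_neg hlam.le,
          ENNReal.ofReal_inv_of_pos (Real.rpow_pos_of_pos hlam _)]

lemma lint_Ioc_rpow {a : ℝ} (ha : -1 < a) :
    ∫⁻ t in Ioc (0:ℝ) 1, ENNReal.ofReal (t ^ a) < ∞ := by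
  have h := (intervalIntegrable_iff_integrableOn_Ioc_of_le (zero_le_one)).mp
    (intervalIntegral.intervalIntegrable_rpow' ha (a := 0) (b := 1))
  exact h.lintegral_lt_top

lemma lint_Ioi_rpow {a : ℝ} (ha : a < -1) :
    ∫⁻ t in Ioi (1:ℝ), ENNReal.ofReal (t ^ a) < ∞ :=
  (integrableOn_Ioi_rpow_of_lt ha one_pos).lintegral_lt_top

lemma Tstep (hN : 0 < N) (hp : 1 < p) (hs0 : 0 < s)
    {g : ℕ → EN N → ℝ} (hg : ∀ n, Measurable (g n))
    {A : ℝ≥0∞} (hA : A ≠ ∞) (hGl : ∀ n, Glfun N s p (g n) ≤ A)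
    (hTp : ∀ n, Tfun N (g n) p ≤ A)
    {r : ℝ} (hr : p ≤ r) {B : ℝ≥0∞} (hB : B ≠ ∞) (hTr : ∀ n, Tfun N (g n) r ≤ B)
    {q' : ℝ} (hq1 : p < q') (hq2 : q' < p + s*p*r/N) :
    ∃ B' : ℝ≥0∞, B' ≠ ∞ ∧ ∀ n, Tfun N (g n) q' ≤ B' := by
  have hp0 : (0:ℝ) < p := by linarith
  have hrr : 1 < r := lt_of_lt_of_le hp hr
  have hr0 : (0:ℝ) < r := by linarith
  have hN0 : (0:ℝ) < (N:ℝ) := by exact_mod_cast hN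
  have hcB0 : (0:ℝ) < (cB N).toReal :=
    ENNReal.toReal_pos (cB_pos hN).ne' (@cB_lt_top N).ne
  have hBt : (0:ℝ) < B.toReal + 1 := by positivity
  set r1 : ℝ := p + s*p*r/N with hr1
  -- choice of t as a function of lam
  set tf : ℝ → ℝ := fun lam => (((B.toReal + 1) * (4/lam) ^ r) / (cB N).toReal) ^ (1/(N:ℝ))
      with htf
  have htf_pos : ∀ lam : ℝ, 0 < lam → 0 < tf lam := by
    intro lam hlam
    apply Real.rpow_pos_of_pos
    positivity
  have hmuB : ∀ lam : ℝ, 0 < lam →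
      muB N (tf lam) = ENNReal.ofReal ((B.toReal + 1) * (4/lam) ^ r) := by
    intro lam hlam
    have hinner : (0:ℝ) < ((B.toReal + 1) * (4/lam) ^ r) / (cB N).toReal := by positivity
    have h1 : tf lam ^ (N:ℝ) = ((B.toReal + 1) * (4/lam) ^ r) / (cB N).toReal := by
      rw [htf]
      dsimp only
      rw [← Real.rpow_mul hinner.le, one_div_mul_cancel hN0.ne', Real.rpow_one]
    rw [muB, h1, show cB N = ENNReal.ofReal ((cB N).toReal) from
      (ENNReal.ofReal_toReal (@cB_lt_top N).ne).symm,
      ← ENNReal.ofReal_mul hcB0.le]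
    congr 1
    rw [ENNReal.toReal_ofReal hcB0.le]
    field_simp
  have hAVb : ∀ lam : ℝ, 0 < lam → ∀ n x,
      AVfun N (g n) (tf lam) x < ENNReal.ofReal (lam/2) := by
    intro lam hlam n x
    have h4 : (0:ℝ) < (4/lam) ^ r := by positivity
    have key : AVfun N (g n) (tf lam) x ≤ ENNReal.ofReal (lam/4) := by
      refine (AV_le_global hN (htf_pos lam hlam) hrr (hg n) x).trans ?_
      have h5 : (Tfun N (g n) r) ^ (1/r) * muB N (tf lam) ^ (-(1/r))
          ≤ (B * (muB N (tf lam))⁻¹) ^ (1/r) := by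
        rw [ENNReal.mul_rpow_of_nonneg _ _ (by positivity), ENNReal.rpow_neg,
          ← ENNReal.inv_rpow]
        exact mul_le_mul_left (ENNReal.rpow_le_rpow (hTr n) (by positivity)) _
      refine h5.trans ?_
      have h6 : B * (muB N (tf lam))⁻¹ ≤ ENNReal.ofReal ((lam/4) ^ r) := by
        rw [hmuB lam hlam, ← ENNReal.ofReal_inv_of_pos (by positivity)]
        calc B * ENNReal.ofReal (((B.toReal + 1) * (4/lam) ^ r)⁻¹)
            ≤ ENNReal.ofReal (B.toReal + 1)
              * ENNReal.ofReal (((B.toReal + 1) * (4/lam) ^ r)⁻¹) := by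
              apply mul_le_mul_left
              calc B = ENNReal.ofReal B.toReal := (ENNReal.ofReal_toReal hB).symm
                _ ≤ ENNReal.ofReal (B.toReal + 1) := ENNReal.ofReal_le_ofReal (by linarith)
          _ = ENNReal.ofReal ((B.toReal + 1) * ((B.toReal + 1) * (4/lam) ^ r)⁻¹) :=
              (ENNReal.ofReal_mul hBt.le).symm
          _ = ENNReal.ofReal ((lam/4) ^ r) := by
              congr 1
              rw [mul_inv, ← mul_assoc, mul_inv_cancel₀ hBt.ne', one_mul,
                ← Real.inv_rpow (by positivity), inv_div]
      refine (ENNReal.rpow_le_rpow h6 (by positivity)).trans (le_of_eq ?_)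
      rw [ENNReal.ofReal_rpow_of_pos (by positivity), ← Real.rpow_mul (by positivity),
        mul_one_div_cancel hr0.ne', Real.rpow_one]
    exact lt_of_le_of_lt key (ENNReal.ofReal_lt_ofReal_iff (by linarith) |>.mpr (by linarith))
  -- the constant in the weak bound
  set c2 : ℝ := (B.toReal + 1) * 4 ^ r / (cB N).toReal with hc2
  have hc2p : 0 < c2 := by positivity
  set KK : ℝ≥0∞ := ENNReal.ofReal (2 ^ p * c2 ^ (s*p/N)) * (cB N)⁻¹ * A with hKK
  have hKKT : KK ≠ ∞ := by
    apply ENNReal.mul_ne_top (ENNReal.mul_ne_top ENNReal.ofReal_ne_top _) hA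
    simp [ENNReal.inv_ne_top, (cB_pos hN).ne']
  have hweak : ∀ n, ∀ lam : ℝ, 0 < lam →
      volume {x : EN N | lam < |g n x|} ≤ KK * ENNReal.ofReal (lam ^ (-r1)) := by
    intro n lam hlam
    have hlev := level_real hN hp hs0 (hg n) (htf_pos lam hlam) hlam (hAVb lam hlam n)
    refine hlev.trans ?_
    have e1 : (ENNReal.ofReal (lam/2) ^ p)⁻¹ = ENNReal.ofReal (2 ^ p * lam ^ (-p)) := by
      rw [ENNReal.ofReal_rpow_of_pos (by positivity),
        ← ENNReal.ofReal_inv_of_pos (by positivity)]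
      congr 1
      rw [Real.div_rpow hlam.le (by norm_num), Real.rpow_neg hlam.le]
      field_simp
    have e2 : tf lam ^ (s*p) = c2 ^ (s*p/N) * lam ^ (-(s*p*r/N)) := by
      have h40 : (0:ℝ) < 4/lam := by positivity
      have hinner : (0:ℝ) < ((B.toReal + 1) * (4/lam) ^ r) / (cB N).toReal := by positivity
      rw [htf]
      dsimp only
      rw [← Real.rpow_mul hinner.le, one_div, inv_mul_eq_div,
        show ((B.toReal + 1) * (4/lam) ^ r) / (cB N).toReal = c2 * (lam ^ r)⁻¹ by
          rw [hc2, Real.div_rpow (by norm_num) hlam.le]; field_simp,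
        Real.mul_rpow hc2p.le (by positivity), ← Real.rpow_neg hlam.le,
        ← Real.rpow_mul hlam.le]
      congr 1
      congr 1
      ring
    calc (ENNReal.ofReal (lam/2) ^ p)⁻¹
          * ((cB N)⁻¹ * ENNReal.ofReal (tf lam ^ (s*p)) * Glfun N s p (g n))
        ≤ (ENNReal.ofReal (lam/2) ^ p)⁻¹
          * ((cB N)⁻¹ * ENNReal.ofReal (tf lam ^ (s*p)) * A) := by
          gcongr
          exact hGl n
      _ = KK * ENNReal.ofReal (lam ^ (-r1)) := by
          rw [e1, e2, hKK, ENNReal.ofReal_mul (by positivity),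
            ENNReal.ofReal_mul (by positivity), ENNReal.ofReal_mul (by positivity),
            show ENNReal.ofReal (lam ^ (-r1))
              = ENNReal.ofReal (lam ^ (-p)) * ENNReal.ofReal (lam ^ (-(s*p*r/(N:ℝ)))) from by
              rw [← ENNReal.ofReal_mul (by positivity), ← Real.rpow_add hlam]
              congr 1
              congr 1
              rw [hr1]; ring]
          ring
  -- layer cake
  set I1 : ℝ≥0∞ := ∫⁻ t in Ioc (0:ℝ) 1, ENNReal.ofReal (t ^ (q'-1-p)) with hI1
  set I2 : ℝ≥0∞ := ∫⁻ t in Ioi (1:ℝ), ENNReal.ofReal (t ^ (q'-1-r1)) with hI2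
  have hI1T : I1 ≠ ∞ := (lint_Ioc_rpow (by linarith)).ne
  have hI2T : I2 ≠ ∞ := (lint_Ioi_rpow (by linarith)).ne
  refine ⟨ENNReal.ofReal q' * (A * I1 + KK * I2),
    ENNReal.mul_ne_top ENNReal.ofReal_ne_top
      (ENNReal.add_ne_top.mpr ⟨ENNReal.mul_ne_top hA hI1T, ENNReal.mul_ne_top hKKT hI2T⟩),
    fun n => ?_⟩
  have hq'0 : (0:ℝ) < q' := by linarith
  have lc := lintegral_rpow_eq_lintegral_meas_lt_mul volume
    (f := fun x => |g n x|) (Filter.Eventually.of_forall fun x => abs_nonneg _)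
    ((hg n).abs.aemeasurable) hq'0
  have hTq : Tfun N (g n) q' = ∫⁻ x, ENNReal.ofReal (|g n x| ^ q') := by
    rw [Tfun]
    apply lintegral_congr
    intro x
    rw [ENNReal.ofReal_rpow_of_nonneg (abs_nonneg _) hq'0.le]
  rw [hTq, lc]
  have hmeas1 : Measurable (fun t : ℝ => A * ENNReal.ofReal (t ^ (q'-1-p))) := by
    fun_prop
  have hmeas2 : Measurable (fun t : ℝ => KK * ENNReal.ofReal (t ^ (q'-1-r1))) := by
    fun_prop
  calc ENNReal.ofReal q'
        * ∫⁻ t in Ioi (0:ℝ), volume {a | t < |g n a|} * ENNReal.ofReal (t ^ (q'-1))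
      ≤ ENNReal.ofReal q' *
        ((∫⁻ t in Ioc (0:ℝ) 1, volume {a | t < |g n a|} * ENNReal.ofReal (t ^ (q'-1)))
          + ∫⁻ t in Ioi (1:ℝ), volume {a | t < |g n a|} * ENNReal.ofReal (t ^ (q'-1))) := by
        apply mul_le_mul_right
        rw [show (Ioi (0:ℝ)) = Ioc 0 1 ∪ Ioi 1 from (Ioc_union_Ioi_eq_Ioi zero_le_one).symm]
        exact lintegral_union_le _ _ _
    _ ≤ ENNReal.ofReal q' * (A * I1 + KK * I2) := by
        apply mul_le_mul_right
        apply add_le_add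
        · calc (∫⁻ t in Ioc (0:ℝ) 1, volume {a | t < |g n a|} * ENNReal.ofReal (t ^ (q'-1)))
              ≤ ∫⁻ t in Ioc (0:ℝ) 1, A * ENNReal.ofReal (t ^ (q'-1-p)) := by
                apply setLIntegral_mono hmeas1
                intro t ht'
                calc volume {a | t < |g n a|} * ENNReal.ofReal (t ^ (q'-1))
                    ≤ A * ENNReal.ofReal (t ^ (-p)) * ENNReal.ofReal (t ^ (q'-1)) :=
                      mul_le_mul_left (cheb_simple hp0 (hg n) (hTp n) ht'.1) _
                  _ = A * ENNReal.ofReal (t ^ (q'-1-p)) := by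
                      rw [mul_assoc, ← ENNReal.ofReal_mul
                        (Real.rpow_nonneg (le_of_lt ht'.1) _), ← Real.rpow_add ht'.1]
                      congr 2
                      ring
            _ = A * I1 := lintegral_const_mul' _ _ hA
        · calc (∫⁻ t in Ioi (1:ℝ), volume {a | t < |g n a|} * ENNReal.ofReal (t ^ (q'-1)))
              ≤ ∫⁻ t in Ioi (1:ℝ), KK * ENNReal.ofReal (t ^ (q'-1-r1)) := by
                apply setLIntegral_mono hmeas2
                intro t ht'
                have ht0 : (0:ℝ) < t := lt_trans one_pos ht'
                calc volume {a | t < |g n a|} * ENNReal.ofReal (t ^ (q'-1))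
                    ≤ KK * ENNReal.ofReal (t ^ (-r1)) * ENNReal.ofReal (t ^ (q'-1)) :=
                      mul_le_mul_left (hweak n t ht0) _
                  _ = KK * ENNReal.ofReal (t ^ (q'-1-r1)) := by
                      rw [mul_assoc, ← ENNReal.ofReal_mul
                        (Real.rpow_nonneg ht0.le _), ← Real.rpow_add ht0]
                      congr 2
                      ring
            _ = KK * I2 := lintegral_const_mul' _ _ hKKT

lemma bootstrap (hN : 0 < N) (hp : 1 < p) (hs0 : 0 < s) (hsp : s * p < N)
    {g : ℕ → EN N → ℝ} (hg : ∀ n, Measurable (g n))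
    {A : ℝ≥0∞} (hA : A ≠ ∞) (hGl : ∀ n, Glfun N s p (g n) ≤ A)
    (hTp : ∀ n, Tfun N (g n) p ≤ A)
    {Q : ℝ} (hQ1 : p ≤ Q) (hQ2 : Q < (N:ℝ) * p / ((N:ℝ) - s * p)) :
    ∃ B : ℝ≥0∞, B ≠ ∞ ∧ ∀ n, Tfun N (g n) Q ≤ B := by
  have hp0 : (0:ℝ) < p := by linarith
  have hN0 : (0:ℝ) < (N:ℝ) := by exact_mod_cast hN
  set δ : ℝ := s * p / N with hδ
  set ps : ℝ := (N:ℝ) * p / ((N:ℝ) - s * p) with hps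
  have hδ0 : 0 < δ := by positivity
  have hδ1 : δ < 1 := by rw [hδ, div_lt_one hN0]; linarith
  have hNsp : (0:ℝ) < (N:ℝ) - s * p := by linarith
  have hpps : p < ps := by
    rw [hps, lt_div_iff₀ hNsp]
    nlinarith [mul_pos (mul_pos hs0 hp0) hp0]
  have hfix : p + δ * ps = ps := by
    rw [hδ, hps]
    field_simp
    have h' : -(p*s) + (N:ℝ) ≠ 0 := (by linarith : (0:ℝ) < -(p*s) + N).ne'
    linear_combination -(mul_inv_cancel₀ h')
  have main : ∀ k : ℕ, ∀ x : ℝ, p ≤ x → x < ps - δ ^ k * (ps - p) →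
      ∃ B : ℝ≥0∞, B ≠ ∞ ∧ ∀ n, Tfun N (g n) x ≤ B := by
    intro k
    induction k with
    | zero => intro x hx1 hx2; simp only [pow_zero, one_mul] at hx2; linarith
    | succ k ih =>
      intro x hx1 hx2
      rcases eq_or_lt_of_le hx1 with hxp | hxp
      · exact ⟨A, hA, by rw [← hxp]; exact hTp⟩
      set rmax : ℝ := ps - δ ^ k * (ps - p) with hrmax
      have hδk1 : δ ^ k ≤ 1 := pow_le_one₀ hδ0.le hδ1.le
      have hrmaxp : p ≤ rmax := by
        rw [hrmax]
        nlinarith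
      have hm : ps - δ ^ (k+1) * (ps - p) = p + δ * rmax := by
        rw [hrmax, pow_succ]
        nlinarith [hfix]
      have hxlt : (x - p)/δ < rmax := by
        rw [div_lt_iff₀ hδ0]
        rw [hm] at hx2
        nlinarith
      have hPb : ∃ r : ℝ, p ≤ r ∧ (x - p)/δ < r ∧
          (∃ B : ℝ≥0∞, B ≠ ∞ ∧ ∀ n, Tfun N (g n) r ≤ B) := by
        rcases le_or_gt (((x - p)/δ + rmax)/2) p with hc | hc
        · exact ⟨p, le_rfl, by linarith, ⟨A, hA, hTp⟩⟩
        · refine ⟨((x - p)/δ + rmax)/2, hc.le, by linarith, ih _ hc.le (by linarith)⟩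
      obtain ⟨r, hrp, hxr, B, hB, hTr⟩ := hPb
      have hxr' : x < p + s * p * r / N := by
        have : x - p < δ * r := by
          rw [← div_lt_iff₀' hδ0]
          exact hxr
        have hδr : δ * r = s * p * r / N := by rw [hδ]; ring
        linarith [hδr ▸ this]
      exact Tstep hN hp hs0 hg hA hGl hTp hrp hB hTr hxp hxr'
  rcases eq_or_lt_of_le hQ1 with hQp | hQp
  · exact ⟨A, hA, by rw [← hQp]; exact hTp⟩
  obtain ⟨k, hk⟩ := exists_pow_lt_of_lt_one (show (0:ℝ) < (ps - Q)/(ps - p) by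
    apply div_pos <;> linarith) hδ1
  refine main k Q hQ1 ?_
  have hppos : (0:ℝ) < ps - p := by linarith
  have : δ ^ k * (ps - p) < ps - Q := (lt_div_iff₀ hppos).mp hk
  linarith

lemma m_tendsto (hN : 0 < N) (hp : 1 < p) (hs0 : 0 < s)
    {g : ℕ → EN N → ℝ} (hg : ∀ n, Measurable (g n))
    {A : ℝ≥0∞} (hA : A ≠ ∞) (hGl : ∀ n, Glfun N s p (g n) ≤ A)
    {S : ℕ → ℝ → ℝ}
    (hSloc : ∀ t : ℝ, 0 < t → ∀ n (x : EN N),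
      (∫⁻ y in ball x t, ENNReal.ofReal |g n y| ^ p) ≤ ENNReal.ofReal (S n t))
    (hS : ∀ t : ℝ, 0 < t → Tendsto (fun n => S n t) atTop (𝓝 0))
    {lam : ℝ} (hlam : 0 < lam) :
    Tendsto (fun n => volume {x : EN N | lam < |g n x|}) atTop (𝓝 0) := by
  have hp0 : (0:ℝ) < p := by linarith
  rw [ENNReal.tendsto_atTop_zero]
  intro ε hε
  set c0 : ℝ≥0∞ := (ENNReal.ofReal (lam/2) ^ p)⁻¹ * (cB N)⁻¹ * A with hc0
  have hc0T : c0 ≠ ∞ := by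
    apply ENNReal.mul_ne_top (ENNReal.mul_ne_top _ _) hA
    · exact ENNReal.inv_ne_top.mpr
        (ENNReal.rpow_pos (ENNReal.ofReal_pos.mpr (by linarith)) ENNReal.ofReal_ne_top).ne'
    · exact ENNReal.inv_ne_top.mpr (cB_pos hN).ne'
  set ε' : ℝ≥0∞ := min ε 1 with hε'
  have hε'0 : 0 < ε' := lt_min hε one_pos
  have hε'T : ε' ≠ ∞ := by simp [hε']
  have hε't : 0 < ε'.toReal := ENNReal.toReal_pos hε'0.ne' hε'T
  -- choose t
  set t : ℝ := (ε'.toReal / (c0.toReal + 1)) ^ (1/(s*p)) with htdef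
  have ht : 0 < t := Real.rpow_pos_of_pos (by positivity) _
  have htsp : t ^ (s*p) = ε'.toReal / (c0.toReal + 1) := by
    rw [htdef, ← Real.rpow_mul (by positivity), one_div_mul_cancel (by positivity), Real.rpow_one]
  have hbound : ENNReal.ofReal (t ^ (s*p)) * c0 ≤ ε' := by
    rw [htsp]
    calc ENNReal.ofReal (ε'.toReal / (c0.toReal + 1)) * c0
        ≤ ENNReal.ofReal (ε'.toReal / (c0.toReal + 1)) * ENNReal.ofReal (c0.toReal + 1) := by
          apply mul_le_mul_right
          calc c0 = ENNReal.ofReal c0.toReal := (ENNReal.ofReal_toReal hc0T).symm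
            _ ≤ ENNReal.ofReal (c0.toReal + 1) := ENNReal.ofReal_le_ofReal (by linarith)
      _ = ENNReal.ofReal (ε'.toReal / (c0.toReal + 1) * (c0.toReal + 1)) :=
          (ENNReal.ofReal_mul (by positivity)).symm
      _ = ε' := by
          rw [div_mul_cancel₀ _ (by positivity : (c0.toReal + 1) ≠ 0),
            ENNReal.ofReal_toReal hε'T]
  -- eventual smallness of S
  set σ : ℝ := (lam/4) ^ p * (muB N t).toReal with hσ
  have hσ0 : 0 < σ :=
    _root_.mul_pos (Real.rpow_pos_of_pos (by linarith) _)
      (ENNReal.toReal_pos (muB_ne_zero hN ht) muB_ne_top)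
  have hev : ∀ᶠ n in atTop, S n t < σ := (hS t ht).eventually_lt_const hσ0
  obtain ⟨n0, hn0⟩ := eventually_atTop.mp hev
  refine ⟨n0, fun n hn => ?_⟩
  -- AV bound
  have hAVn : ∀ x, AVfun N (g n) t x < ENNReal.ofReal (lam/2) := by
    intro x
    have h1 : AVfun N (g n) t x
        ≤ (ENNReal.ofReal (S n t)) ^ (1/p) * (muB N t) ^ (-(1/p)) := by
      refine (AV_le_r hN ht hp (hg n) x).trans ?_
      exact mul_le_mul_left (ENNReal.rpow_le_rpow (hSloc t ht n x) (by positivity)) _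
    have h2 : (ENNReal.ofReal (S n t)) ^ (1/p) * (muB N t) ^ (-(1/p))
        ≤ ENNReal.ofReal (lam/4) := by
      have hS' : ENNReal.ofReal (S n t) ≤ ENNReal.ofReal ((lam/4)^p) * muB N t := by
        calc ENNReal.ofReal (S n t) ≤ ENNReal.ofReal σ :=
              ENNReal.ofReal_le_ofReal (hn0 n hn).le
          _ = ENNReal.ofReal ((lam/4)^p) * muB N t := by
              rw [hσ, ENNReal.ofReal_mul (by positivity), ENNReal.ofReal_toReal muB_ne_top]
      calc (ENNReal.ofReal (S n t)) ^ (1/p) * (muB N t) ^ (-(1/p))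
          ≤ (ENNReal.ofReal ((lam/4)^p) * muB N t) ^ (1/p) * (muB N t) ^ (-(1/p)) :=
            mul_le_mul_left (ENNReal.rpow_le_rpow hS' (by positivity)) _
        _ = ENNReal.ofReal (lam/4) := by
            rw [ENNReal.mul_rpow_of_nonneg _ _ (by positivity), mul_assoc,
              ← ENNReal.rpow_add _ _ (muB_ne_zero hN ht) muB_ne_top, add_neg_cancel,
              ENNReal.rpow_zero, mul_one, ENNReal.ofReal_rpow_of_pos (by positivity),
              ← Real.rpow_mul (by positivity), mul_one_div_cancel hp0.ne', Real.rpow_one]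
    exact lt_of_le_of_lt (h1.trans h2)
      ((ENNReal.ofReal_lt_ofReal_iff (by linarith)).mpr (by linarith))
  calc volume {x : EN N | lam < |g n x|}
      ≤ (ENNReal.ofReal (lam/2) ^ p)⁻¹
        * ((cB N)⁻¹ * ENNReal.ofReal (t ^ (s*p)) * Glfun N s p (g n)) :=
        level_real hN hp hs0 (hg n) ht hlam hAVn
    _ ≤ (ENNReal.ofReal (lam/2) ^ p)⁻¹
        * ((cB N)⁻¹ * ENNReal.ofReal (t ^ (s*p)) * A) := by gcongr; exact hGl n
    _ = ENNReal.ofReal (t ^ (s*p)) * c0 := by rw [hc0]; ring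
    _ ≤ ε' := hbound
    _ ≤ ε := min_le_left _ _

lemma Tq_tendsto (hN : 0 < N) (hp : 1 < p) (hs0 : 0 < s)
    {g : ℕ → EN N → ℝ} (hg : ∀ n, Measurable (g n))
    {A : ℝ≥0∞} (hA : A ≠ ∞) (hGl : ∀ n, Glfun N s p (g n) ≤ A)
    (hTp : ∀ n, Tfun N (g n) p ≤ A)
    {S : ℕ → ℝ → ℝ}
    (hSloc : ∀ t : ℝ, 0 < t → ∀ n (x : EN N),
      (∫⁻ y in ball x t, ENNReal.ofReal |g n y| ^ p) ≤ ENNReal.ofReal (S n t))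
    (hS : ∀ t : ℝ, 0 < t → Tendsto (fun n => S n t) atTop (𝓝 0))
    {q Q : ℝ} (hq : p < q) (hQ : q < Q)
    {BQ : ℝ≥0∞} (hBQ : BQ ≠ ∞) (hTQ : ∀ n, Tfun N (g n) Q ≤ BQ) :
    Tendsto (fun n => Tfun N (g n) q) atTop (𝓝 0) := by
  have hp0 : (0:ℝ) < p := by linarith
  have hq0 : (0:ℝ) < q := by linarith
  rw [ENNReal.tendsto_atTop_zero]
  intro ε hε
  set ε' : ℝ≥0∞ := min ε 1 with hε'
  have hε'0 : 0 < ε' := lt_min hε one_pos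
  have hε'T : ε' ≠ ∞ := by simp [hε']
  have hε't : 0 < ε'.toReal := ENNReal.toReal_pos hε'0.ne' hε'T
  have oneThird : 0 < ε' / 3 := ENNReal.div_pos hε'0.ne' (by norm_num)
  -- choose η
  set η : ℝ := (ε'.toReal / (3 * (A.toReal + 1))) ^ (1/(q-p)) with hη
  have hηpos : 0 < η := Real.rpow_pos_of_pos (by positivity) _
  have hη1 : ENNReal.ofReal (η ^ (q-p)) * A ≤ ε' / 3 := by
    have h1 : η ^ (q-p) = ε'.toReal / (3 * (A.toReal + 1)) := by
      rw [hη, ← Real.rpow_mul (by positivity), one_div_mul_cancel (by linarith), Real.rpow_one]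
    rw [h1]
    calc ENNReal.ofReal (ε'.toReal / (3 * (A.toReal + 1))) * A
        ≤ ENNReal.ofReal (ε'.toReal / (3 * (A.toReal + 1))) * ENNReal.ofReal (A.toReal + 1) := by
          apply mul_le_mul_right
          calc A = ENNReal.ofReal A.toReal := (ENNReal.ofReal_toReal hA).symm
            _ ≤ ENNReal.ofReal (A.toReal + 1) := ENNReal.ofReal_le_ofReal (by linarith)
      _ = ENNReal.ofReal (ε'.toReal / (3 * (A.toReal + 1)) * (A.toReal + 1)) :=
          (ENNReal.ofReal_mul (by positivity)).symm
      _ ≤ ε' / 3 := by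
          rw [show ε'.toReal / (3 * (A.toReal + 1)) * (A.toReal + 1) = ε'.toReal / 3 by
            field_simp]
          rw [ENNReal.ofReal_div_of_pos (by norm_num), ENNReal.ofReal_toReal hε'T,
            ENNReal.ofReal_ofNat]
    -- choose M
  set M : ℝ := (ε'.toReal / (3 * (BQ.toReal + 1))) ^ (1/(q-Q)) with hM
  have hMpos : 0 < M := Real.rpow_pos_of_pos (by positivity) _
  have hM1 : ENNReal.ofReal (M ^ (q-Q)) * BQ ≤ ε' / 3 := by
    have h1 : M ^ (q-Q) = ε'.toReal / (3 * (BQ.toReal + 1)) := by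
      rw [hM, ← Real.rpow_mul (by positivity), one_div_mul_cancel (by nlinarith), Real.rpow_one]
    rw [h1]
    calc ENNReal.ofReal (ε'.toReal / (3 * (BQ.toReal + 1))) * BQ
        ≤ ENNReal.ofReal (ε'.toReal / (3 * (BQ.toReal + 1))) * ENNReal.ofReal (BQ.toReal + 1) := by
          apply mul_le_mul_right
          calc BQ = ENNReal.ofReal BQ.toReal := (ENNReal.ofReal_toReal hBQ).symm
            _ ≤ ENNReal.ofReal (BQ.toReal + 1) := ENNReal.ofReal_le_ofReal (by linarith)
      _ = ENNReal.ofReal (ε'.toReal / (3 * (BQ.toReal + 1)) * (BQ.toReal + 1)) :=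
          (ENNReal.ofReal_mul (by positivity)).symm
      _ ≤ ε' / 3 := by
          rw [show ε'.toReal / (3 * (BQ.toReal + 1)) * (BQ.toReal + 1) = ε'.toReal / 3 by
            field_simp]
          rw [ENNReal.ofReal_div_of_pos (by norm_num), ENNReal.ofReal_toReal hε'T,
            ENNReal.ofReal_ofNat]
  -- eventual smallness of middle term
  have hmid : ∀ᶠ n in atTop, ENNReal.ofReal (M ^ q) * volume {x : EN N | η < |g n x|} ≤ ε' / 3 := by
    have h := ENNReal.Tendsto.const_mul (a := ENNReal.ofReal (M ^ q))
      (m_tendsto hN hp hs0 hg hA hGl hSloc hS hηpos) (Or.inr ENNReal.ofReal_ne_top)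
    rw [mul_zero] at h
    obtain ⟨n0, hn0⟩ := (ENNReal.tendsto_atTop_zero.mp h) (ε'/3) oneThird
    exact eventually_atTop.mpr ⟨n0, hn0⟩
  obtain ⟨n0, hn0⟩ := eventually_atTop.mp hmid
  refine ⟨n0, fun n hn => ?_⟩
  -- pointwise bound
  have hpt : ∀ x : EN N, ENNReal.ofReal |g n x| ^ q
      ≤ ENNReal.ofReal (η ^ (q-p)) * ENNReal.ofReal |g n x| ^ p
        + Set.indicator {x : EN N | η < |g n x|} (fun _ => ENNReal.ofReal (M ^ q)) x
        + ENNReal.ofReal (M ^ (q-Q)) * ENNReal.ofReal |g n x| ^ Q := by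
    intro x
    set a : ℝ := |g n x| with ha
    have ha0 : 0 ≤ a := abs_nonneg _
    rcases le_or_gt a η with h1 | h1
    · have : ENNReal.ofReal a ^ q ≤ ENNReal.ofReal (η ^ (q-p)) * ENNReal.ofReal a ^ p := by
        rw [ENNReal.ofReal_rpow_of_nonneg ha0 hq0.le, ENNReal.ofReal_rpow_of_nonneg ha0 hp0.le,
          ← ENNReal.ofReal_mul (by positivity)]
        apply ENNReal.ofReal_le_ofReal
        rcases eq_or_lt_of_le ha0 with h0 | h0
        · rw [← h0, Real.zero_rpow hq0.ne']
          positivity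
        · calc a ^ q = a ^ (q-p) * a ^ p := by
                rw [← Real.rpow_add h0]; congr 1; ring
            _ ≤ η ^ (q-p) * a ^ p := by
                apply mul_le_mul_of_nonneg_right _ (by positivity)
                exact Real.rpow_le_rpow ha0 h1 (by linarith)
      exact this.trans (le_add_of_le_of_nonneg (le_add_of_le_of_nonneg le_rfl zero_le)
        zero_le)
    · rcases le_or_gt a M with h2 | h2
      · have hxmem : x ∈ {x : EN N | η < |g n x|} := h1
        have : ENNReal.ofReal a ^ q ≤ ENNReal.ofReal (M ^ q) := by
          rw [ENNReal.ofReal_rpow_of_nonneg ha0 hq0.le]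
          exact ENNReal.ofReal_le_ofReal (Real.rpow_le_rpow ha0 h2 hq0.le)
        rw [Set.indicator_of_mem hxmem]
        exact this.trans (le_add_of_le_of_nonneg
          (le_add_of_nonneg_of_le zero_le le_rfl) zero_le)
      · have : ENNReal.ofReal a ^ q
            ≤ ENNReal.ofReal (M ^ (q-Q)) * ENNReal.ofReal a ^ Q := by
          rw [ENNReal.ofReal_rpow_of_nonneg ha0 hq0.le,
            ENNReal.ofReal_rpow_of_nonneg ha0 (by linarith : (0:ℝ) ≤ Q),
            ← ENNReal.ofReal_mul (by positivity)]
          apply ENNReal.ofReal_le_ofReal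
          calc a ^ q = a ^ (q-Q) * a ^ Q := by
                rw [← Real.rpow_add (lt_trans hMpos h2)]; congr 1; ring
            _ ≤ M ^ (q-Q) * a ^ Q := by
                apply mul_le_mul_of_nonneg_right _ (by positivity)
                exact Real.rpow_le_rpow_of_nonpos hMpos h2.le (by linarith)
        exact this.trans (le_add_of_nonneg_of_le zero_le le_rfl)
  -- integrate
  have hint : Tfun N (g n) q
      ≤ ENNReal.ofReal (η ^ (q-p)) * Tfun N (g n) p
        + ENNReal.ofReal (M ^ q) * volume {x : EN N | η < |g n x|}
        + ENNReal.ofReal (M ^ (q-Q)) * Tfun N (g n) Q := by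
    have hsetm : MeasurableSet {x : EN N | η < |g n x|} :=
      measurableSet_lt measurable_const (hg n).abs
    have m1 : Measurable fun x : EN N =>
        ENNReal.ofReal (η ^ (q-p)) * ENNReal.ofReal |g n x| ^ p :=
      ((ENNReal.measurable_ofReal.comp (hg n).abs).pow_const p).const_mul _
    have m2 : Measurable fun x : EN N =>
        Set.indicator {x : EN N | η < |g n x|} (fun _ => ENNReal.ofReal (M ^ q)) x :=
      measurable_const.indicator hsetm
    calc Tfun N (g n) q ≤ _ := lintegral_mono hpt
      _ = ENNReal.ofReal (η ^ (q-p)) * Tfun N (g n) p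
          + ENNReal.ofReal (M ^ q) * volume {x : EN N | η < |g n x|}
          + ENNReal.ofReal (M ^ (q-Q)) * Tfun N (g n) Q := by
          rw [lintegral_add_left' (f := fun x => ENNReal.ofReal (η ^ (q-p)) * ENNReal.ofReal |g n x| ^ p + Set.indicator {x : EN N | η < |g n x|} (fun _ => ENNReal.ofReal (M ^ q)) x) ((m1.add m2).aemeasurable) _,
            lintegral_add_left' m1.aemeasurable _,
            lintegral_const_mul' _ _ ENNReal.ofReal_ne_top,
            lintegral_const_mul' _ _ ENNReal.ofReal_ne_top,
            lintegral_indicator hsetm]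
          simp [Tfun, setLIntegral_const]
  calc Tfun N (g n) q ≤ _ := hint
    _ ≤ ε'/3 + ε'/3 + ε'/3 := by
        refine add_le_add (add_le_add ?_ (hn0 n hn)) ?_
        · exact le_trans (mul_le_mul_right (hTp n) _) hη1
        · exact le_trans (mul_le_mul_right (hTQ n) _) hM1
    _ = ε' := ENNReal.add_thirds ε'
    _ ≤ ε := min_le_left _ _

lemma growth {p q : ℝ} (hp : 1 < p) (hq : p < q) {f : ℝ → ℝ} (hf1 : Continuous f)
    (hf0 : f 0 = 0)
    (hf2 : Tendsto (fun t => f t / |t| ^ (p - 1)) (𝓝[≠] (0:ℝ)) (𝓝 0))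
    (hf3 : Tendsto (fun t => f t / |t| ^ (q - 1)) (cocompact ℝ) (𝓝 0))
    {δ : ℝ} (hδ : 0 < δ) :
    ∃ C : ℝ, 0 < C ∧ ∀ t : ℝ, |f t * t| ≤ δ * |t| ^ p + C * |t| ^ q := by
  have hp0 : (0:ℝ) < p := by linarith
  have hq1 : (0:ℝ) < q - 1 := by linarith
  -- near zero
  have h2 : ∀ᶠ t in 𝓝[≠] (0:ℝ), |f t / |t| ^ (p-1)| < δ := by
    have := NormedAddCommGroup.tendsto_nhds_zero.mp hf2 δ hδ
    simp only [Real.norm_eq_abs] at this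
    exact this
  obtain ⟨r, hr0, hr⟩ := Metric.mem_nhdsWithin_iff.mp h2
  have hnear : ∀ t : ℝ, 0 < |t| → |t| < r → |f t| ≤ δ * |t| ^ (p-1) := by
    intro t ht0 htr
    have htmem : t ∈ ball (0:ℝ) r ∩ {(0:ℝ)}ᶜ := by
      constructor
      · simpa [Real.dist_eq] using htr
      · simp only [Set.mem_compl_iff, Set.mem_singleton_iff]
        intro h; rw [h] at ht0; simp at ht0
    have := hr htmem
    simp only [Set.mem_setOf_eq] at this
    have habs : |f t| / |t| ^ (p-1) < δ := by
      rw [abs_div, abs_of_nonneg (Real.rpow_nonneg (abs_nonneg t) _)] at this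
      exact this
    have hpow : (0:ℝ) < |t| ^ (p-1) := Real.rpow_pos_of_pos ht0 _
    calc |f t| = |f t| / |t| ^ (p-1) * |t| ^ (p-1) := by field_simp
      _ ≤ δ * |t| ^ (p-1) := mul_le_mul_of_nonneg_right habs.le hpow.le
  -- far away
  have h3 : ∀ᶠ t in cocompact ℝ, |f t / |t| ^ (q-1)| < δ := by
    have := NormedAddCommGroup.tendsto_nhds_zero.mp hf3 δ hδ
    simp only [Real.norm_eq_abs] at this
    exact this
  obtain ⟨K, hKc, hKs⟩ := mem_cocompact.mp h3
  obtain ⟨M, hM⟩ := hKc.isBounded.subset_ball 0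
  set M' : ℝ := max M 1 with hM'
  have hM'1 : (1:ℝ) ≤ M' := le_max_right _ _
  have hfar : ∀ t : ℝ, M' ≤ |t| → |f t| ≤ δ * |t| ^ (q-1) := by
    intro t htM
    have htK : t ∉ K := by
      intro hmem
      have := hM hmem
      simp only [mem_ball, Real.dist_eq, sub_zero] at this
      have : |t| < M' := lt_of_lt_of_le this (le_max_left _ _)
      linarith
    have := hKs htK
    simp only [Set.mem_setOf_eq] at this
    have ht0 : (0:ℝ) < |t| := by linarith
    have habs : |f t| / |t| ^ (q-1) < δ := by
      rw [abs_div, abs_of_nonneg (Real.rpow_nonneg (abs_nonneg t) _)] at this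
      exact this
    have hpow : (0:ℝ) < |t| ^ (q-1) := Real.rpow_pos_of_pos ht0 _
    calc |f t| = |f t| / |t| ^ (q-1) * |t| ^ (q-1) := by field_simp
      _ ≤ δ * |t| ^ (q-1) := mul_le_mul_of_nonneg_right habs.le hpow.le
  -- middle
  obtain ⟨K0, hK0⟩ := (isCompact_Icc (a := -M') (b := M')).exists_bound_of_continuousOn
    hf1.continuousOn
  have hK0' : 0 ≤ K0 := le_trans (norm_nonneg (f 0)) (hK0 0 (by constructor <;> linarith))
  set r' : ℝ := min r 1 / 2 with hr'
  have hr'0 : 0 < r' := by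
    rw [hr']
    have : 0 < min r 1 := lt_min hr0 one_pos
    linarith
  have hr'r : r' < r := by
    rw [hr']
    have h1 : min r 1 ≤ r := min_le_left _ _
    have : 0 < min r 1 := lt_min hr0 one_pos
    linarith
  set C : ℝ := δ + K0 / r' ^ (q-1) + 1 with hC
  have hrq : (0:ℝ) < r' ^ (q-1) := Real.rpow_pos_of_pos hr'0 _
  have hCpos : 0 < C := by
    rw [hC]
    have : 0 ≤ K0 / r' ^ (q-1) := by positivity
    linarith
  refine ⟨C, hCpos, fun t => ?_⟩
  rcases eq_or_ne t 0 with rfl | ht0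
  · rw [hf0]
    simp only [zero_mul, abs_zero]
    positivity
  have hta : (0:ℝ) < |t| := abs_pos.mpr ht0
  have habs1 : |f t * t| = |f t| * |t| := abs_mul _ _
  rcases lt_or_ge (|t|) r' with hcase1 | hcase1
  · -- small t
    have h1 : |f t| ≤ δ * |t| ^ (p-1) := hnear t hta (lt_trans hcase1 hr'r)
    calc |f t * t| = |f t| * |t| := habs1
      _ ≤ δ * |t| ^ (p-1) * |t| := mul_le_mul_of_nonneg_right h1 (abs_nonneg t)
      _ = δ * |t| ^ p := by
          rw [mul_assoc, ← Real.rpow_add_one (ne_of_gt hta), show p - 1 + 1 = p by ring]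
      _ ≤ δ * |t| ^ p + C * |t| ^ q := by
          have : 0 ≤ C * |t| ^ q := by positivity
          linarith
  rcases le_or_gt (|t|) M' with hcase2 | hcase2
  · -- middle t
    have h1 : |f t| ≤ K0 := by
      have := hK0 t (by constructor <;> [linarith [neg_abs_le t]; linarith [le_abs_self t]])
      simpa [Real.norm_eq_abs] using this
    have h2' : r' ^ (q-1) ≤ |t| ^ (q-1) :=
      Real.rpow_le_rpow hr'0.le hcase1 hq1.le
    calc |f t * t| = |f t| * |t| := habs1
      _ ≤ K0 * |t| := mul_le_mul_of_nonneg_right h1 (abs_nonneg t)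
      _ = K0 / r' ^ (q-1) * (r' ^ (q-1) * |t|) := by field_simp
      _ ≤ K0 / r' ^ (q-1) * (|t| ^ (q-1) * |t|) := by
          apply mul_le_mul_of_nonneg_left _ (by positivity)
          exact mul_le_mul_of_nonneg_right h2' (abs_nonneg t)
      _ = K0 / r' ^ (q-1) * |t| ^ q := by
          rw [← Real.rpow_add_one (ne_of_gt hta), show q - 1 + 1 = q by ring]
      _ ≤ δ * |t| ^ p + C * |t| ^ q := by
          have h3' : K0 / r' ^ (q-1) ≤ C := by rw [hC]; linarith
          have h4 : K0 / r' ^ (q-1) * |t| ^ q ≤ C * |t| ^ q :=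
            mul_le_mul_of_nonneg_right h3' (by positivity)
          have : 0 ≤ δ * |t| ^ p := by positivity
          linarith
  · -- large t
    have h1 : |f t| ≤ δ * |t| ^ (q-1) := hfar t hcase2.le
    calc |f t * t| = |f t| * |t| := habs1
      _ ≤ δ * |t| ^ (q-1) * |t| := mul_le_mul_of_nonneg_right h1 (abs_nonneg t)
      _ = δ * |t| ^ q := by
          rw [mul_assoc, ← Real.rpow_add_one (ne_of_gt hta), show q - 1 + 1 = q by ring]
      _ ≤ δ * |t| ^ p + C * |t| ^ q := by
          have hδC : δ * |t| ^ q ≤ C * |t| ^ q := by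
            apply mul_le_mul_of_nonneg_right _ (by positivity)
            rw [hC]
            have : 0 ≤ K0 / r' ^ (q-1) := by positivity
            linarith
          have : 0 ≤ δ * |t| ^ p := by positivity
          linarith

end St12

/-- vanishing Nehari sequences tend to zero in norm: if
`{u_n} ⊂ N_ε` is bounded in `‖·‖_ε` and
`sup_y ∫_{B_R(y)} |u_n|^p → 0` for every `R > 0`, then `‖u_n‖_ε → 0`. -/
theorem statement_12
    (N : ℕ) (s p ps : ℝ) (hs : s ∈ Ioo (0:ℝ) 1) (hp : 1 < p) (hN : s * p < N)
    (hps : ps = N * p / (N - s * p))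
    (V : EuclideanSpace ℝ (Fin N) → ℝ) (hVcont : Continuous V)
    (hV0 : 0 < ⨅ x, V x)
    (ε : ℝ) (hε : 0 < ε)
    (f : ℝ → ℝ)
    (hf1 : Continuous f) (hf1' : ∀ t ≤ (0:ℝ), f t = 0)
    (hf2 : Tendsto (fun t => f t / |t| ^ (p - 1)) (𝓝[≠] (0:ℝ)) (𝓝 0))
    (q : ℝ) (hq : p < q) (hq' : q < ps)
    (hf3 : Tendsto (fun t => f t / |t| ^ (q - 1)) (cocompact ℝ) (𝓝 0))
    (u : ℕ → EuclideanSpace ℝ (Fin N) → ℝ)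
    (hu : ∀ n, MemWeps N s p V ε (u n))
    (huint : ∀ n, Integrable (fun x => f (u n x) * u n x) volume)
    (hbdd : ∃ C : ℝ, ∀ n, (normEpsP N s p V ε (u n)) ^ (1 / p) ≤ C)
    (hNehari : ∀ n, normEpsP N s p V ε (u n) = ∫ x, f (u n x) * u n x)
    (hvanish : ∀ R : ℝ, 0 < R →
      Tendsto (fun n => ⨆ y : EuclideanSpace ℝ (Fin N),
        ∫ x in ball y R, |u n x| ^ p) atTop (𝓝 0)) :
    Tendsto (fun n => (normEpsP N s p V ε (u n)) ^ (1 / p)) atTop (𝓝 0) := by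
  classical
  obtain ⟨C, hC⟩ := hbdd
  have hs0 : 0 < s := hs.1
  have hp0 : (0:ℝ) < p := by linarith
  have hspos : 0 < s * p := by positivity
  have hNr : (0:ℝ) < (N:ℝ) := lt_trans hspos hN
  have hN0 : 0 < N := by exact_mod_cast hNr
  -- V lower bound
  have hbb : BddBelow (Set.range V) := by
    by_contra h
    rw [Real.iInf_of_not_bddBelow h] at hV0
    exact lt_irrefl 0 hV0
  set V0 : ℝ := ⨅ x, V x with hV0def
  have hVlb : ∀ y, V0 ≤ V y := fun y => ciInf_le hbb y
  -- integrability of |u|^p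
  have hIabs : ∀ n, Integrable (fun x => |u n x| ^ p) volume := by
    intro n
    have h := (hu n).1.integrable_norm_rpow
      (ne_of_gt (ENNReal.ofReal_pos.mpr hp0)) ENNReal.ofReal_ne_top
    simpa [Real.norm_eq_abs, ENNReal.toReal_ofReal hp0.le] using h
  have habs_nonneg : ∀ n, 0 ≤ᵐ[(volume : Measure (EuclideanSpace ℝ (Fin N)))]
      fun x => |u n x| ^ p :=
    fun n => Filter.Eventually.of_forall fun x => by positivity
  have hVε_nonneg : ∀ n, (0:ℝ) ≤ ∫ x, V (ε • x) * |u n x| ^ p := fun n =>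
    integral_nonneg fun x => mul_nonneg (le_trans hV0.le (hVlb _)) (by positivity)
  have hgag_nonneg : ∀ n, 0 ≤ gagliardoP N s p (u n) := fun n =>
    integral_nonneg fun z => by positivity
  have hnorm_nonneg : ∀ n, 0 ≤ normEpsP N s p V ε (u n) := fun n =>
    add_nonneg (hgag_nonneg n) (hVε_nonneg n)
  have hC0 : 0 ≤ C := le_trans (Real.rpow_nonneg (hnorm_nonneg 0) _) (hC 0)
  have hnormb : ∀ n, normEpsP N s p V ε (u n) ≤ C ^ p := by
    intro n
    have h1 := Real.rpow_le_rpow (Real.rpow_nonneg (hnorm_nonneg n) _) (hC n) hp0.le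
    rwa [← Real.rpow_mul (hnorm_nonneg n), one_div_mul_cancel hp0.ne', Real.rpow_one] at h1
  -- V0-lower bound on the norm
  have hVTnorm : ∀ n, V0 * ∫ x, |u n x| ^ p ≤ normEpsP N s p V ε (u n) := by
    intro n
    have h2 : ∫ x, V0 * |u n x| ^ p ≤ ∫ x, V (ε • x) * |u n x| ^ p :=
      integral_mono ((hIabs n).const_mul V0) (hu n).2.2
        (fun x => mul_le_mul_of_nonneg_right (hVlb _) (by positivity))
    rw [integral_const_mul] at h2
    have := hgag_nonneg n
    rw [normEpsP]
    linarith
  -- measurable representatives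
  have hmk : ∀ n, ∃ gg : EuclideanSpace ℝ (Fin N) → ℝ,
      Measurable gg ∧ u n =ᵐ[volume] gg := fun n =>
    ⟨(hu n).1.1.mk (u n), (hu n).1.1.stronglyMeasurable_mk.measurable, (hu n).1.1.ae_eq_mk⟩
  choose g hgm hge using hmk
  -- Tfun p transfer
  have hTp_eq : ∀ n, St12.Tfun N (g n) p = ENNReal.ofReal (∫ x, |u n x| ^ p) := by
    intro n
    rw [ofReal_integral_eq_lintegral_ofReal (hIabs n) (habs_nonneg n), St12.Tfun]
    apply lintegral_congr_ae
    filter_upwards [hge n] with x hx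
    rw [hx, ENNReal.ofReal_rpow_of_nonneg (abs_nonneg _) hp0.le]
  have hTpb : ∀ n, St12.Tfun N (g n) p ≤ ENNReal.ofReal (C ^ p / V0) := by
    intro n
    rw [hTp_eq n]
    apply ENNReal.ofReal_le_ofReal
    rw [le_div_iff₀ hV0]
    calc (∫ x, |u n x| ^ p) * V0 = V0 * ∫ x, |u n x| ^ p := mul_comm _ _
      _ ≤ normEpsP N s p V ε (u n) := hVTnorm n
      _ ≤ C ^ p := hnormb n
  -- Glfun transfer
  have hGl_eq : ∀ n, St12.Glfun N s p (g n) = ENNReal.ofReal (gagliardoP N s p (u n)) := by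
    intro n
    rw [gagliardoP, ofReal_integral_eq_lintegral_ofReal (hu n).2.1
      (Filter.Eventually.of_forall fun z => by positivity), St12.Glfun]
    apply lintegral_congr_ae
    have h1 : (fun z : EuclideanSpace ℝ (Fin N) × EuclideanSpace ℝ (Fin N) => u n z.1)
        =ᵐ[volume] (fun z => g n z.1) :=
      Measure.quasiMeasurePreserving_fst.ae_eq_comp (hge n)
    have h2 : (fun z : EuclideanSpace ℝ (Fin N) × EuclideanSpace ℝ (Fin N) => u n z.2)
        =ᵐ[volume] (fun z => g n z.2) :=
      Measure.quasiMeasurePreserving_snd.ae_eq_comp (hge n)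
    filter_upwards [h1, h2] with z e1 e2
    rw [show u n z.1 = g n z.1 from e1, show u n z.2 = g n z.2 from e2]
  have hGlb : ∀ n, St12.Glfun N s p (g n) ≤ ENNReal.ofReal (C ^ p) := by
    intro n
    rw [hGl_eq n]
    apply ENNReal.ofReal_le_ofReal
    have := hVε_nonneg n
    have h2 := hnormb n
    rw [normEpsP] at h2
    linarith
  -- uniform bound A
  set A : ℝ≥0∞ := ENNReal.ofReal (C ^ p) + ENNReal.ofReal (C ^ p / V0) with hA
  have hAne : A ≠ ∞ := ENNReal.add_ne_top.mpr ⟨ENNReal.ofReal_ne_top, ENNReal.ofReal_ne_top⟩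
  have hGlA : ∀ n, St12.Glfun N s p (g n) ≤ A := fun n => le_trans (hGlb n) le_self_add
  have hTpA : ∀ n, St12.Tfun N (g n) p ≤ A := fun n => le_trans (hTpb n) le_add_self
  -- local smallness
  set Sv : ℕ → ℝ → ℝ := fun n t =>
    ⨆ y : EuclideanSpace ℝ (Fin N), ∫ x in ball y t, |u n x| ^ p with hSv
  have hSloc : ∀ t : ℝ, 0 < t → ∀ n (x : EuclideanSpace ℝ (Fin N)),
      (∫⁻ y in ball x t, ENNReal.ofReal |g n y| ^ p) ≤ ENNReal.ofReal (Sv n t) := by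
    intro t ht n x
    have h1 : (∫⁻ y in ball x t, ENNReal.ofReal |g n y| ^ p)
        = ENNReal.ofReal (∫ y in ball x t, |u n y| ^ p) := by
      rw [ofReal_integral_eq_lintegral_ofReal ((hIabs n).integrableOn)
        ((habs_nonneg n).filter_mono (ae_mono Measure.restrict_le_self))]
      apply lintegral_congr_ae
      filter_upwards [ae_restrict_of_ae (hge n)] with y hy
      rw [hy, ENNReal.ofReal_rpow_of_nonneg (abs_nonneg _) hp0.le]
    rw [h1]
    apply ENNReal.ofReal_le_ofReal
    have hbdd2 : BddAbove (Set.range fun y : EuclideanSpace ℝ (Fin N) =>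
        ∫ x in ball y t, |u n x| ^ p) := by
      refine ⟨∫ x, |u n x| ^ p, ?_⟩
      rintro b ⟨y, rfl⟩
      exact setIntegral_le_integral (hIabs n) (habs_nonneg n)
    exact le_ciSup hbdd2 x
  have hSten : ∀ t : ℝ, 0 < t → Tendsto (fun n => Sv n t) atTop (𝓝 0) := fun t ht =>
    hvanish t ht
  -- bootstrap exponent
  set Q : ℝ := (q + ps)/2 with hQdef
  have hpsq : q < ps := hq'
  have hQq : q < Q := by rw [hQdef]; linarith
  have hQ1 : p ≤ Q := by rw [hQdef]; linarith
  have hQ2 : Q < (N:ℝ) * p / ((N:ℝ) - s * p) := by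
    rw [← hps, hQdef]; linarith
  obtain ⟨BQ, hBQ, hTQ⟩ := St12.bootstrap hN0 hp hs0 hN hgm hAne hGlA hTpA hQ1 hQ2
  have hTq := St12.Tq_tendsto hN0 hp hs0 hgm hAne hGlA hTpA hSloc hSten hq hQq hBQ hTQ
  -- growth with δ = V0/2
  have hf0 : f 0 = 0 := hf1' 0 le_rfl
  have hδpos : 0 < V0 / 2 := by linarith
  obtain ⟨C2, hC2pos, hC2⟩ := St12.growth hp hq hf1 hf0 hf2 hf3 hδpos
  -- the key ENNReal inequality
  set X : ℕ → ℝ≥0∞ := fun n => ENNReal.ofReal (normEpsP N s p V ε (u n)) with hX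
  have hXfin : ∀ n, X n ≠ ∞ := fun n => ENNReal.ofReal_ne_top
  have hXle : ∀ n, X n ≤ X n / 2 + ENNReal.ofReal C2 * St12.Tfun N (g n) q := by
    intro n
    have e0 : normEpsP N s p V ε (u n) ≤ ∫ x, |f (u n x) * u n x| := by
      rw [hNehari n]
      refine le_trans (le_abs_self _) ?_
      have := norm_integral_le_integral_norm (μ := (volume : Measure (EuclideanSpace ℝ (Fin N))))
        (f := fun x => f (u n x) * u n x)
      simpa [Real.norm_eq_abs, abs_mul] using this
    have e1 : X n ≤ ∫⁻ x, ENNReal.ofReal (|f (u n x) * u n x|) := by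
      rw [hX]
      dsimp only
      calc ENNReal.ofReal (normEpsP N s p V ε (u n))
          ≤ ENNReal.ofReal (∫ x, |f (u n x) * u n x|) := ENNReal.ofReal_le_ofReal e0
        _ = ∫⁻ x, ENNReal.ofReal (|f (u n x) * u n x|) :=
            ofReal_integral_eq_lintegral_ofReal (huint n).abs
              (Filter.Eventually.of_forall fun x => abs_nonneg _)
    have e2 : (∫⁻ x, ENNReal.ofReal (|f (u n x) * u n x|))
        ≤ ENNReal.ofReal (V0/2) * St12.Tfun N (g n) p
          + ENNReal.ofReal C2 * St12.Tfun N (g n) q := by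
      have m1 : Measurable fun x : EuclideanSpace ℝ (Fin N) =>
          ENNReal.ofReal (V0/2) * ENNReal.ofReal |g n x| ^ p :=
        ((ENNReal.measurable_ofReal.comp (hgm n).abs).pow_const p).const_mul _
      calc (∫⁻ x, ENNReal.ofReal (|f (u n x) * u n x|))
          ≤ ∫⁻ x, (ENNReal.ofReal (V0/2) * ENNReal.ofReal |g n x| ^ p
              + ENNReal.ofReal C2 * ENNReal.ofReal |g n x| ^ q) := by
            apply lintegral_mono_ae
            filter_upwards [hge n] with x hx
            calc ENNReal.ofReal (|f (u n x) * u n x|)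
                ≤ ENNReal.ofReal (V0/2 * |u n x| ^ p + C2 * |u n x| ^ q) :=
                  ENNReal.ofReal_le_ofReal (hC2 (u n x))
              _ = _ := by
                  rw [hx, ENNReal.ofReal_add (by positivity) (by positivity),
                    ENNReal.ofReal_mul hδpos.le, ENNReal.ofReal_mul hC2pos.le,
                    ENNReal.ofReal_rpow_of_nonneg (abs_nonneg _) hp0.le,
                    ENNReal.ofReal_rpow_of_nonneg (abs_nonneg _)
                      (by linarith : (0:ℝ) ≤ q)]
        _ = ENNReal.ofReal (V0/2) * St12.Tfun N (g n) p
            + ENNReal.ofReal C2 * St12.Tfun N (g n) q := by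
            rw [lintegral_add_left' m1.aemeasurable _,
              lintegral_const_mul' _ _ ENNReal.ofReal_ne_top,
              lintegral_const_mul' _ _ ENNReal.ofReal_ne_top]
            rfl
    have h3 : ENNReal.ofReal V0 * St12.Tfun N (g n) p ≤ X n := by
      rw [hTp_eq n, hX]
      dsimp only
      rw [← ENNReal.ofReal_mul hV0.le]
      exact ENNReal.ofReal_le_ofReal (hVTnorm n)
    have h2 : ENNReal.ofReal (V0/2) * St12.Tfun N (g n) p ≤ X n / 2 := by
      have e3 : ENNReal.ofReal (V0/2) * St12.Tfun N (g n) p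
          = ENNReal.ofReal V0 * St12.Tfun N (g n) p / 2 := by
        rw [ENNReal.ofReal_div_of_pos (by norm_num), ENNReal.ofReal_ofNat,
          div_eq_mul_inv, div_eq_mul_inv]
        ring
      rw [e3]
      exact ENNReal.div_le_div_right h3 2
    calc X n ≤ ENNReal.ofReal (V0/2) * St12.Tfun N (g n) p
          + ENNReal.ofReal C2 * St12.Tfun N (g n) q := e1.trans e2
      _ ≤ X n / 2 + ENNReal.ofReal C2 * St12.Tfun N (g n) q := add_le_add_left h2 _
  have hX2 : ∀ n, X n ≤ 2 * (ENNReal.ofReal C2 * St12.Tfun N (g n) q) := by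
    intro n
    have h4 : X n - X n / 2 ≤ ENNReal.ofReal C2 * St12.Tfun N (g n) q :=
      tsub_le_iff_right.mpr (by rw [add_comm]; exact hXle n)
    rw [ENNReal.sub_half (hXfin n)] at h4
    calc X n = X n / 2 + X n / 2 := (ENNReal.add_halves _).symm
      _ ≤ ENNReal.ofReal C2 * St12.Tfun N (g n) q
          + ENNReal.ofReal C2 * St12.Tfun N (g n) q := add_le_add h4 h4
      _ = 2 * (ENNReal.ofReal C2 * St12.Tfun N (g n) q) := (two_mul _).symm
  have hXtend : Tendsto X atTop (𝓝 0) := by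
    rw [ENNReal.tendsto_atTop_zero]
    intro ε0 hε0
    have ht2 := ENNReal.Tendsto.const_mul (a := 2 * ENNReal.ofReal C2) hTq
      (Or.inr (ENNReal.mul_ne_top (by norm_num) ENNReal.ofReal_ne_top))
    rw [mul_zero] at ht2
    obtain ⟨n0, hn0⟩ := (ENNReal.tendsto_atTop_zero.mp ht2) ε0 hε0
    refine ⟨n0, fun n hn => ?_⟩
    calc X n ≤ 2 * (ENNReal.ofReal C2 * St12.Tfun N (g n) q) := hX2 n
      _ = 2 * ENNReal.ofReal C2 * St12.Tfun N (g n) q := (mul_assoc _ _ _).symm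
      _ ≤ ε0 := hn0 n hn
  have hnorm_tend : Tendsto (fun n => normEpsP N s p V ε (u n)) atTop (𝓝 0) := by
    have h := (ENNReal.tendsto_toReal (show (0:ℝ≥0∞) ≠ ⊤ by simp)).comp hXtend
    simp only [Function.comp_def, ENNReal.toReal_zero] at h
    have heq : (fun n => normEpsP N s p V ε (u n)) = fun n => (X n).toReal :=
      funext fun n => (ENNReal.toReal_ofReal (hnorm_nonneg n)).symm
    rw [heq]
    exact h
  have hcont : ContinuousAt (fun x : ℝ => x ^ (1/p)) 0 :=
    Real.continuousAt_rpow_const 0 (1/p) (Or.inr (by positivity))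
  have hfinal := hcont.tendsto.comp hnorm_tend
  rw [Real.zero_rpow (by positivity : (1:ℝ)/p ≠ 0)] at hfinal
  exact hfinal
end
end

section
/- Let p > 1 be a real number and for t ∈ ℝ write t⁻ = min(t, 0). Then for all real numbers x and y, |x−y|^{p−2}(x−y)(x⁻ − y⁻) ≥ |x⁻ − y⁻|^p. -/
/-- Let `p > 1` and write `t⁻ = min t 0`. Then for all real `x, y`:
`|x - y|^(p-2) (x - y) (x⁻ - y⁻) ≥ |x⁻ - y⁻|^p`.
Here `|t|^(p-2)` is real-power (`rpow`), so `|t|^(p-2) * t = 0` when `t = 0`. -/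
theorem statement_15 (p : ℝ) (hp : 1 < p) :
    ∀ x y : ℝ,
      |min x 0 - min y 0| ^ p ≤ |x - y| ^ (p - 2) * (x - y) * (min x 0 - min y 0) := by
  intro x y
  set a := min x 0 - min y 0 with ha
  have h1 : 0 ≤ (x - y) * a := by
    rcases le_total x 0 with hx | hx <;> rcases le_total y 0 with hy | hy
    · rw [ha, min_eq_left hx, min_eq_left hy]; nlinarith
    · rw [ha, min_eq_left hx, min_eq_right hy]; nlinarith
    · rw [ha, min_eq_right hx, min_eq_left hy]; nlinarith
    · rw [ha, min_eq_right hx, min_eq_right hy]; nlinarith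
  have h2 : |a| ≤ |x - y| := by
    rcases le_total x 0 with hx | hx <;> rcases le_total y 0 with hy | hy
    · rw [ha, min_eq_left hx, min_eq_left hy]
    · rw [ha, min_eq_left hx, min_eq_right hy, sub_zero,
        abs_of_nonpos hx, abs_of_nonpos (by linarith : x - y ≤ 0)]; linarith
    · rw [ha, min_eq_right hx, min_eq_left hy, zero_sub, abs_neg,
        abs_of_nonpos hy, abs_of_nonneg (by linarith : (0:ℝ) ≤ x - y)]; linarith
    · rw [ha, min_eq_right hx, min_eq_right hy, sub_zero, abs_zero]; positivity
  by_cases ha0 : a = 0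
  · rw [ha0, abs_zero, Real.zero_rpow (by positivity : p ≠ 0), mul_zero]
  · have hxy : x ≠ y := by
      intro h
      apply ha0
      rw [ha, h]; ring
    have hpos : 0 < |x - y| := abs_pos.mpr (sub_ne_zero.mpr hxy)
    have hapos : 0 < |a| := abs_pos.mpr ha0
    have hrw : |x - y| ^ (p - 2) * (x - y) * a = |x - y| ^ (p - 1) * |a| := by
      rw [mul_assoc, ← abs_of_nonneg h1, abs_mul,
        show |x - y| ^ (p - 2) * (|x - y| * |a|)
            = |x - y| ^ (p - 2) * |x - y| ^ (1 : ℝ) * |a| by rw [Real.rpow_one]; ring,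
        ← Real.rpow_add hpos, show p - 2 + 1 = p - 1 by ring]
    rw [hrw]
    calc |a| ^ p = |a| ^ (p - 1) * |a| := by
          rw [show p = (p - 1) + 1 by ring, Real.rpow_add hapos, Real.rpow_one]
          ring_nf
      _ ≤ |x - y| ^ (p - 1) * |a| := by
          apply mul_le_mul_of_nonneg_right _ (abs_nonneg a)
          exact Real.rpow_le_rpow (abs_nonneg a) h2 (by linarith)
end

section
/- Let p > 1 be a real number and let γ : ℝ → ℝ be continuously differentiable with γ'(t) ≥ 0 for all t. Define Γ(t) = ∫_0^t (γ'(τ))^{1/p} dτ. Then for all real numbers a and b, |a−b|^{p−2}(a−b)(γ(a) − γ(b)) ≥ |Γ(a) − Γ(b)|^p. -/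
open MeasureTheory intervalIntegral Set

private lemma aux16 (p : ℝ) (hp : 1 < p) (γ : ℝ → ℝ)
    (hγ : ContDiff ℝ 1 γ) (hγ' : ∀ t, 0 ≤ deriv γ t) (b a : ℝ) (hba : b ≤ a) :
    (∫ τ in b..a, (deriv γ τ) ^ (1 / p)) ^ p ≤ (a - b) ^ (p - 1) * (γ a - γ b) := by
  have hp0 : (0:ℝ) < p := lt_trans one_pos hp
  have hc : Continuous (deriv γ) := hγ.continuous_deriv le_rfl
  have hf : Continuous fun t => (deriv γ t) ^ (1 / p) :=
    hc.rpow_const (fun x => Or.inr (by positivity))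
  have hpq : p.HolderConjugate (p / (p - 1)) := Real.HolderConjugate.conjExponent hp
  set q := p / (p - 1) with hq
  set μ := volume.restrict (Ioc b a) with hμ
  obtain ⟨C, hC⟩ := isCompact_Icc.exists_bound_of_continuousOn (hf.continuousOn (s := Icc b a))
  have hmem : MemLp (fun t => (deriv γ t) ^ (1 / p)) (ENNReal.ofReal p) μ := by
    refine MemLp.of_bound (hf.aestronglyMeasurable.restrict) C ?_
    filter_upwards [ae_restrict_mem measurableSet_Ioc] with x hx
    exact hC x (Ioc_subset_Icc_self hx)
  have hmem1 : MemLp (fun _ : ℝ => (1:ℝ)) (ENNReal.ofReal q) μ := memLp_const 1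
  have holder := integral_mul_le_Lp_mul_Lq_of_nonneg (μ := μ) hpq
    (Filter.Eventually.of_forall fun x => Real.rpow_nonneg (hγ' x) _)
    (Filter.Eventually.of_forall fun _ => zero_le_one) hmem hmem1
  simp only [mul_one, Real.one_rpow] at holder
  have hfp : ∀ x, ((deriv γ x) ^ (1/p)) ^ p = deriv γ x := by
    intro x
    rw [← Real.rpow_mul (hγ' x), one_div_mul_cancel hp0.ne', Real.rpow_one]
  simp only [hfp] at holder
  have hconst : ∫ _x, (1:ℝ) ∂μ = a - b := by
    simp [hμ, Real.volume_Ioc, ENNReal.toReal_ofReal (sub_nonneg.2 hba), hba]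
  rw [hconst] at holder
  have hFTC : ∫ τ in b..a, deriv γ τ = γ a - γ b :=
    intervalIntegral.integral_deriv_eq_sub
      (fun x _ => (hγ.differentiable one_ne_zero).differentiableAt) (hc.intervalIntegrable b a)
  have hG : (0:ℝ) ≤ γ a - γ b := by
    rw [← hFTC]
    exact intervalIntegral.integral_nonneg hba fun x _ => hγ' x
  have hset : ∫ τ in b..a, (deriv γ τ) ^ (1/p) = ∫ x, (deriv γ x) ^ (1/p) ∂μ :=
    intervalIntegral.integral_of_le hba
  have hsetd : ∫ x, deriv γ x ∂μ = γ a - γ b := by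
    rw [← intervalIntegral.integral_of_le hba, hFTC]
  rw [hsetd] at holder
  have hI : (0:ℝ) ≤ ∫ x, (deriv γ x) ^ (1/p) ∂μ :=
    integral_nonneg fun x => Real.rpow_nonneg (hγ' x) _
  have hab : (0:ℝ) ≤ a - b := sub_nonneg.2 hba
  have hqp : 1/q * p = p - 1 := by
    rw [hq]; field_simp
  calc (∫ τ in b..a, (deriv γ τ) ^ (1/p)) ^ p
      ≤ ((γ a - γ b) ^ (1/p) * (a - b) ^ (1/q)) ^ p := by
        rw [hset]
        exact Real.rpow_le_rpow hI holder hp0.le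
    _ = (a - b) ^ (p - 1) * (γ a - γ b) := by
        rw [Real.mul_rpow (Real.rpow_nonneg hG _) (Real.rpow_nonneg hab _),
          ← Real.rpow_mul hG, ← Real.rpow_mul hab, one_div_mul_cancel hp0.ne',
          Real.rpow_one, hqp, mul_comm]

/-- Let `p > 1` and let `γ : ℝ → ℝ` be `C¹` with `γ' ≥ 0`.
Define `Γ t = ∫_0^t (γ'(τ))^(1/p) dτ`. Then for all real `a, b`:
`|a-b|^(p-2)(a-b)(γ(a) - γ(b)) ≥ |Γ(a) - Γ(b)|^p`.
Here `|t|^(p-2)` is real-power (`rpow`), so `|t|^(p-2) * t = 0` when `t = 0`. -/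
theorem statement_16 (p : ℝ) (hp : 1 < p) (γ : ℝ → ℝ)
    (hγ : ContDiff ℝ 1 γ) (hγ' : ∀ t, 0 ≤ deriv γ t)
    (Γ : ℝ → ℝ) (hΓ : ∀ t, Γ t = ∫ τ in (0:ℝ)..t, (deriv γ τ) ^ (1 / p)) :
    ∀ a b : ℝ,
      |Γ a - Γ b| ^ p ≤ |a - b| ^ (p - 2) * (a - b) * (γ a - γ b) := by
  have hp0 : (0:ℝ) < p := lt_trans one_pos hp
  have hc : Continuous (deriv γ) := hγ.continuous_deriv le_rfl
  have hf : Continuous fun t => (deriv γ t) ^ (1 / p) :=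
    hc.rpow_const (fun x => Or.inr (by positivity))
  have key : ∀ a b : ℝ, b ≤ a →
      |Γ a - Γ b| ^ p ≤ |a - b| ^ (p - 2) * (a - b) * (γ a - γ b) := by
    intro a b hba
    rcases eq_or_lt_of_le hba with rfl | hlt
    · simp [Real.zero_rpow hp0.ne']
    have hΓab : Γ a - Γ b = ∫ τ in b..a, (deriv γ τ) ^ (1/p) := by
      rw [hΓ a, hΓ b]
      exact (intervalIntegral.integral_interval_sub_left (hf.intervalIntegrable 0 a)
        (hf.intervalIntegrable 0 b))
    have hΓnn : 0 ≤ Γ a - Γ b := by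
      rw [hΓab]
      exact intervalIntegral.integral_nonneg hba fun x _ => Real.rpow_nonneg (hγ' x) _
    have habs : |Γ a - Γ b| = Γ a - Γ b := abs_of_nonneg hΓnn
    have habs2 : |a - b| = a - b := abs_of_nonneg (sub_nonneg.2 hba)
    have hpow : |a - b| ^ (p - 2) * (a - b) = (a - b) ^ (p - 1) := by
      rw [habs2]
      have : (a - b) ^ (p - 1) = (a - b) ^ (p - 2) * (a - b) := by
        rw [show p - 1 = (p - 2) + 1 by ring, Real.rpow_add_one (sub_ne_zero.2 hlt.ne')]
      rw [this]
    rw [habs, hΓab, hpow]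
    exact aux16 p hp γ hγ hγ' b a hba
  intro a b
  rcases le_total b a with hba | hab
  · exact key a b hba
  · have h := key b a hab
    have e1 : |Γ a - Γ b| = |Γ b - Γ a| := abs_sub_comm _ _
    have e2 : |a - b| = |b - a| := abs_sub_comm _ _
    have e3 : (a - b) * (γ a - γ b) = (b - a) * (γ b - γ a) := by ring
    calc |Γ a - Γ b| ^ p = |Γ b - Γ a| ^ p := by rw [e1]
      _ ≤ |b - a| ^ (p - 2) * (b - a) * (γ b - γ a) := h
      _ = |a - b| ^ (p - 2) * (a - b) * (γ a - γ b) := by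
          rw [e2, mul_assoc, mul_assoc, e3]
end

section
/- Let p > 1 be a real number and for t ∈ ℝ write t⁺ = max(t, 0). Then for all real numbers v₁, v₂, g₁, g₂, one has ( |v₁−v₂|^{p−2}(v₁−v₂) − |g₁−g₂|^{p−2}(g₁−g₂) ) · ( (v₁−g₁)⁺ − (v₂−g₂)⁺ ) ≥ 0. -/
private lemma phi_nonneg_eval (p : ℝ) (hp : 1 < p) {t : ℝ} (ht : 0 ≤ t) :
    |t| ^ (p - 2) * t = t ^ (p - 1) := by
  rcases eq_or_lt_of_le ht with h | h
  · rw [← h]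
    simp [Real.zero_rpow (by linarith : p - 1 ≠ 0)]
  · rw [abs_of_pos h, ← Real.rpow_add_one h.ne']
    ring_nf

private lemma phi_mono (p : ℝ) (hp : 1 < p) {a b : ℝ} (hab : a ≤ b) :
    |a| ^ (p - 2) * a ≤ |b| ^ (p - 2) * b := by
  rcases le_or_gt 0 a with ha | ha
  · rw [phi_nonneg_eval p hp ha, phi_nonneg_eval p hp (ha.trans hab)]
    exact Real.rpow_le_rpow ha hab (by linarith)
  · rcases le_or_gt b 0 with hb | hb
    · have ea : |a| ^ (p - 2) * a = -((-a) ^ (p - 1)) := by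
        have := phi_nonneg_eval p hp (t := -a) (by linarith)
        rw [abs_neg] at this
        linarith [this]
      have eb : |b| ^ (p - 2) * b = -((-b) ^ (p - 1)) := by
        have := phi_nonneg_eval p hp (t := -b) (by linarith)
        rw [abs_neg] at this
        linarith [this]
      rw [ea, eb, neg_le_neg_iff]
      exact Real.rpow_le_rpow (by linarith) (by linarith) (by linarith)
    · have h1 : |a| ^ (p - 2) * a ≤ 0 :=
        mul_nonpos_of_nonneg_of_nonpos (Real.rpow_nonneg (abs_nonneg a) _) ha.le
      have h2 : 0 ≤ |b| ^ (p - 2) * b :=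
        mul_nonneg (Real.rpow_nonneg (abs_nonneg b) _) hb.le
      linarith

/-- Let `p > 1` and write `t⁺ = max t 0`. Then for all real `v₁ v₂ g₁ g₂`:
`(|v₁-v₂|^(p-2)(v₁-v₂) - |g₁-g₂|^(p-2)(g₁-g₂)) · ((v₁-g₁)⁺ - (v₂-g₂)⁺) ≥ 0`.
Here `|t|^(p-2)` is real-power (`rpow`), so `|t|^(p-2) * t = 0` when `t = 0`. -/
theorem statement_19 (p : ℝ) (hp : 1 < p) :
    ∀ v₁ v₂ g₁ g₂ : ℝ,
      0 ≤ (|v₁ - v₂| ^ (p - 2) * (v₁ - v₂) - |g₁ - g₂| ^ (p - 2) * (g₁ - g₂)) *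
            (max (v₁ - g₁) 0 - max (v₂ - g₂) 0) := by
  intro v₁ v₂ g₁ g₂
  rcases le_total (g₁ - g₂) (v₁ - v₂) with h | h
  · have h1 : |g₁ - g₂| ^ (p - 2) * (g₁ - g₂) ≤ |v₁ - v₂| ^ (p - 2) * (v₁ - v₂) :=
      phi_mono p hp h
    have h2 : max (v₂ - g₂) 0 ≤ max (v₁ - g₁) 0 :=
      max_le_max (by linarith) le_rfl
    nlinarith
  · have h1 : |v₁ - v₂| ^ (p - 2) * (v₁ - v₂) ≤ |g₁ - g₂| ^ (p - 2) * (g₁ - g₂) :=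
      phi_mono p hp h
    have h2 : max (v₁ - g₁) 0 ≤ max (v₂ - g₂) 0 :=
      max_le_max (by linarith) le_rfl
    nlinarith
end
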